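/- arXiv:0909.2504 — 8 statements merged into one kernel-verified Lean document; each statement's English description precedes it below -/
import Mathlib

section
/- There exists an absolute constant C > 0 with the following property. Let V be a finite set of points in ℝ², let r > 0, and let d_G be the shortest-path (hop-count) distance of the geometric graph G(V,r). Suppose G(V,r) is connected and there exists P ≥ 1 such that for all u,v ∈ V: ‖u−v‖/r ≤ d_G(u,v) ≤ P·(‖u−v‖/r + 1). Then for every u ∈ V and every real R ≥ 2P, the ball {v ∈ V : d_G(u,v) ≤ 2R} can be covered by at most C·P² balls of radius R in the metric d_G centered at points of V. -/
/-- The geometric graph on vertex set `ι` with positions `x : ι → ℝ²` and radius `r`: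
distinct vertices are adjacent iff their Euclidean distance is less than `r`. -/
def geomGraph {ι : Type*} (x : ι → EuclideanSpace ℝ (Fin 2)) (r : ℝ) : SimpleGraph ι where
  Adj u v := u ≠ v ∧ dist (x u) (x v) < r
  symm := ⟨fun u v h => ⟨h.1.symm, by rw [dist_comm]; exact h.2⟩⟩
  loopless := ⟨fun u h => h.1 rfl⟩

open Metric MeasureTheory Finset ENNReal

set_option maxHeartbeats 1000000 in
/-- If every topological hole of the geometric graph `G(V,r)` causes detours by a factor at
most `P` (i.e. `‖u−v‖/r ≤ d_G(u,v) ≤ P(‖u−v‖/r + 1)`), then the doubling constant of the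
shortest-path metric is `O(P²)`: for `R ≥ 2P`, every ball of radius `2R` can be covered by
at most `C·P²` balls of radius `R`. -/
theorem doubling_of_slack : ∃ C : ℝ, 0 < C ∧
    ∀ (V : Finset (EuclideanSpace ℝ (Fin 2))) (r P : ℝ), 0 < r → 1 ≤ P →
    (geomGraph (fun v : ↥V => (v : EuclideanSpace ℝ (Fin 2))) r).Connected →
    (∀ u v : ↥V,
      ‖(u : EuclideanSpace ℝ (Fin 2)) - (v : EuclideanSpace ℝ (Fin 2))‖ / r ≤
        ((geomGraph (fun w : ↥V => (w : EuclideanSpace ℝ (Fin 2))) r).dist u v : ℝ) ∧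
      ((geomGraph (fun w : ↥V => (w : EuclideanSpace ℝ (Fin 2))) r).dist u v : ℝ) ≤
        P * (‖(u : EuclideanSpace ℝ (Fin 2)) - (v : EuclideanSpace ℝ (Fin 2))‖ / r + 1)) →
    ∀ (u : ↥V) (R : ℝ), 2 * P ≤ R →
    ∃ s : Finset ↥V, (s.card : ℝ) ≤ C * P ^ 2 ∧
      {v : ↥V | ((geomGraph (fun w : ↥V => (w : EuclideanSpace ℝ (Fin 2))) r).dist u v : ℝ)
          ≤ 2 * R} ⊆
        ⋃ w ∈ s, {v : ↥V |
          ((geomGraph (fun w' : ↥V => (w' : EuclideanSpace ℝ (Fin 2))) r).dist w v : ℝ) ≤ R} := by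
  classical
  refine ⟨81, by norm_num, ?_⟩
  intro V r P hr hP _hconn h u R hR
  let E := EuclideanSpace ℝ (Fin 2)
  set G := geomGraph (fun w : ↥V => (w : E)) r with hG
  have hP0 : (0 : ℝ) < P := lt_of_lt_of_le one_pos hP
  have hq2 : 2 ≤ R / P := (le_div_iff₀ hP0).2 (by linarith)
  set ρ : ℝ := (R / P - 1) * r with hρdef
  have hρr : r ≤ ρ := by nlinarith
  have hρ0 : 0 < ρ := lt_of_lt_of_le hr hρr
  have hR0 : (0 : ℝ) < R := by nlinarith
  -- the ball of radius 2R in the graph metric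
  set S : Finset ↥V := Finset.univ.filter (fun v => ((G.dist u v : ℝ) ≤ 2 * R)) with hSdef
  -- a maximal ρ-separated subset of S
  set 𝒜 : Finset (Finset ↥V) := S.powerset.filter
    (fun s => (s : Set ↥V).Pairwise (fun a b => ρ ≤ dist (a : E) (b : E))) with h𝒜
  have hempty : ∅ ∈ 𝒜 := by
    simp [h𝒜, Set.Pairwise]
  obtain ⟨s, hs𝒜, hsmax⟩ := Finset.exists_max_image 𝒜 Finset.card ⟨∅, hempty⟩
  have hsS : s ⊆ S := Finset.mem_powerset.1 (Finset.mem_filter.1 hs𝒜).1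
  have hsep : (s : Set ↥V).Pairwise (fun a b => ρ ≤ dist (a : E) (b : E)) :=
    (Finset.mem_filter.1 hs𝒜).2
  -- covering property from maximality
  have hcov : ∀ v ∈ S, ∃ w ∈ s, dist (w : E) (v : E) < ρ := by
    intro v hv
    by_contra hc
    push_neg at hc
    have hvs : v ∉ s := by
      intro hvs
      have := hc v hvs
      simp at this
      exact absurd this (not_le.2 hρ0)
    have hins : insert v s ∈ 𝒜 := by
      refine Finset.mem_filter.2 ⟨Finset.mem_powerset.2 ?_, ?_⟩
      · exact Finset.insert_subset hv hsS
      · rw [Finset.coe_insert]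
        haveI : Std.Symm (fun a b : ↥V => ρ ≤ dist (a : E) (b : E)) := ⟨fun a b hab => by
          rwa [dist_comm]⟩
        refine Set.pairwise_insert_of_symm.2 ⟨hsep, ?_⟩
        intro b hb _
        rw [dist_comm]
        exact hc b hb
    have := hsmax _ hins
    rw [Finset.card_insert_of_notMem hvs] at this
    omega
  -- packing bound via volumes
  have hsubball : ∀ w ∈ s, ball (w : E) (ρ / 2) ⊆ ball (u : E) (2 * R * r + ρ / 2) := by
    intro w hw
    have hwS : (G.dist u w : ℝ) ≤ 2 * R := by
      have := Finset.mem_filter.1 (hsS hw)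
      exact this.2
    have hnorm : ‖(u : E) - (w : E)‖ ≤ 2 * R * r := by
      have h1 := (h u w).1
      have : ‖(u : E) - (w : E)‖ / r ≤ 2 * R := le_trans h1 hwS
      calc ‖(u : E) - (w : E)‖ = ‖(u : E) - (w : E)‖ / r * r := by field_simp
        _ ≤ 2 * R * r := by nlinarith
    have hdist : dist (w : E) (u : E) ≤ 2 * R * r := by
      rw [dist_eq_norm, norm_sub_rev]; exact hnorm
    exact ball_subset_ball' (by linarith)
  have hdisj : (↑s : Set ↥V).PairwiseDisjoint (fun w : ↥V => ball (w : E) (ρ / 2)) := by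
    intro a ha b hb hab
    exact ball_disjoint_ball (by linarith [hsep ha hb hab])
  set c : ℝ≥0∞ := volume (ball (0 : E) 1) with hc
  have hc0 : c ≠ 0 := (measure_ball_pos volume 0 one_pos).ne'
  have hctop : c ≠ ⊤ := measure_ball_lt_top.ne
  have hvol : ∀ w : ↥V, volume (ball (w : E) (ρ / 2)) = ENNReal.ofReal ((ρ / 2) ^ 2) * c := by
    intro w
    rw [Measure.addHaar_ball volume (w : E) (by positivity : (0:ℝ) ≤ ρ / 2)]
    congr 2
    simp [E, finrank_euclideanSpace]
  have hvolbig : volume (ball (u : E) (2 * R * r + ρ / 2))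
      = ENNReal.ofReal ((2 * R * r + ρ / 2) ^ 2) * c := by
    rw [Measure.addHaar_ball volume (u : E) (by positivity : (0:ℝ) ≤ 2 * R * r + ρ / 2)]
    congr 2
    simp [E, finrank_euclideanSpace]
  have hμle : (s.card : ℝ≥0∞) * (ENNReal.ofReal ((ρ / 2) ^ 2) * c)
      ≤ ENNReal.ofReal ((2 * R * r + ρ / 2) ^ 2) * c := by
    have h1 : volume (⋃ w ∈ s, ball (w : E) (ρ / 2))
        = ∑ w ∈ s, volume (ball (w : E) (ρ / 2)) :=
      measure_biUnion_finset hdisj (fun _ _ => measurableSet_ball)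
    have h2 : ∑ w ∈ s, volume (ball (w : E) (ρ / 2))
        = (s.card : ℝ≥0∞) * (ENNReal.ofReal ((ρ / 2) ^ 2) * c) := by
      rw [Finset.sum_congr rfl (fun w _ => hvol w), Finset.sum_const, nsmul_eq_mul]
    have h3 : volume (⋃ w ∈ s, ball (w : E) (ρ / 2))
        ≤ volume (ball (u : E) (2 * R * r + ρ / 2)) :=
      measure_mono (Set.iUnion₂_subset hsubball)
    rw [h1, h2, hvolbig] at h3
    exact h3
  have hreal : (s.card : ℝ) * (ρ / 2) ^ 2 ≤ (2 * R * r + ρ / 2) ^ 2 := by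
    rw [← mul_assoc] at hμle
    have h4 := (ENNReal.mul_le_mul_iff_left hc0 hctop).1 hμle
    have h5 : ENNReal.ofReal ((s.card : ℝ) * (ρ / 2) ^ 2)
        ≤ ENNReal.ofReal ((2 * R * r + ρ / 2) ^ 2) := by
      rwa [ENNReal.ofReal_mul (Nat.cast_nonneg _), ENNReal.ofReal_natCast]
    exact (ENNReal.ofReal_le_ofReal_iff (by positivity)).1 h5
  -- arithmetic: 2Rr + ρ/2 ≤ 9P·(ρ/2), hence card ≤ 81 P²
  have hkey : 2 * R * r + ρ / 2 ≤ 9 * P * (ρ / 2) := by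
    have hq : ρ = (R / P - 1) * r := hρdef
    have hRP : R = (R / P) * P := by field_simp
    nlinarith [mul_pos hP0 hr, mul_nonneg (sub_nonneg.2 hq2) hr.le,
      mul_nonneg (mul_nonneg (sub_nonneg.2 hq2) (by linarith : (0:ℝ) ≤ P - 1)) hr.le,
      mul_nonneg (mul_nonneg (sub_nonneg.2 (by linarith : (2:ℝ) ≤ R / P))
        (by linarith : (0:ℝ) ≤ 5 * P - 1)) hr.le]
  have hcard : (s.card : ℝ) ≤ 81 * P ^ 2 := by
    have hsq : (2 * R * r + ρ / 2) ^ 2 ≤ (9 * P * (ρ / 2)) ^ 2 := by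
      have : (0:ℝ) ≤ 2 * R * r + ρ / 2 := by positivity
      nlinarith
    have h6 : (s.card : ℝ) * (ρ / 2) ^ 2 ≤ 81 * P ^ 2 * (ρ / 2) ^ 2 := by
      calc (s.card : ℝ) * (ρ / 2) ^ 2 ≤ (9 * P * (ρ / 2)) ^ 2 := le_trans hreal hsq
        _ = 81 * P ^ 2 * (ρ / 2) ^ 2 := by ring
    exact le_of_mul_le_mul_right h6 (by positivity)
  refine ⟨s, hcard, ?_⟩
  intro v hv
  have hvS : v ∈ S := Finset.mem_filter.2 ⟨Finset.mem_univ v, hv⟩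
  obtain ⟨w, hw, hwv⟩ := hcov v hvS
  refine Set.mem_iUnion₂.2 ⟨w, hw, ?_⟩
  show (G.dist w v : ℝ) ≤ R
  have h7 := (h w v).2
  have hnorm : ‖(w : E) - (v : E)‖ ≤ ρ := by
    rw [← dist_eq_norm]; exact hwv.le
  have h8 : P * (‖(w : E) - (v : E)‖ / r + 1) ≤ P * (ρ / r + 1) := by
    have : ‖(w : E) - (v : E)‖ / r ≤ ρ / r := by gcongr
    nlinarith
  have h9 : P * (ρ / r + 1) = R := by
    rw [hρdef]
    field_simp
    ring
  linarith [le_trans h7 h8]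
end

section
/- There exists a constant α (independent of n, r, and V) with the following property. Let n ≥ 2, r > 0, and partition the square [0,√n)² into congruent square cells of side r/√5 (assume √5·√n/r is an integer). Let V ⊆ [0,√n)² be a finite set of points such that every cell contains at least one point of V, and let d_G be the shortest-path (hop-count) distance of the geometric graph G(V,r). Then for every u ∈ V and every real R ≥ 1, the ball {v ∈ V : d_G(u,v) ≤ 2R} can be covered by at most α balls of radius R in the metric d_G centered at points of V. -/
/-- The square region `[0,√n) × [0,√n)` in which the network nodes live. -/
def netSquare (n : ℕ) : Set (EuclideanSpace ℝ (Fin 2)) :=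
  {p | p 0 ∈ Set.Ico 0 (Real.sqrt n) ∧ p 1 ∈ Set.Ico 0 (Real.sqrt n)}

/-- The square cell of side `s` with lower-left corner `(i·s, j·s)`. -/
def cell (s : ℝ) (i j : ℕ) : Set (EuclideanSpace ℝ (Fin 2)) :=
  {p | p 0 ∈ Set.Ico ((i : ℝ) * s) (((i : ℝ) + 1) * s) ∧
       p 1 ∈ Set.Ico ((j : ℝ) * s) (((j : ℝ) + 1) * s)}

lemma coord_abs_le_dist (p q : EuclideanSpace ℝ (Fin 2)) (c : Fin 2) :
    |p c - q c| ≤ dist p q := by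
  rw [EuclideanSpace.dist_eq]
  have h : dist (p c) (q c) ^ 2 ≤ ∑ i, dist (p i) (q i) ^ 2 :=
    Finset.single_le_sum (f := fun i => dist (p i) (q i) ^ 2)
      (fun i _ => sq_nonneg _) (Finset.mem_univ c)
  calc |p c - q c| = dist (p c) (q c) := (Real.dist_eq _ _).symm
    _ = Real.sqrt (dist (p c) (q c) ^ 2) := (Real.sqrt_sq dist_nonneg).symm
    _ ≤ _ := Real.sqrt_le_sqrt h

lemma dist_lt_of_coords (p q : EuclideanSpace ℝ (Fin 2)) {a b r : ℝ}
    (h0 : |p 0 - q 0| < a) (h1 : |p 1 - q 1| < b)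
    (hr : 0 < r) (hab : a ^ 2 + b ^ 2 ≤ r ^ 2) : dist p q < r := by
  rw [EuclideanSpace.dist_eq, Real.sqrt_lt' hr]
  have e : ∑ i, dist (p i) (q i) ^ 2 = dist (p 0) (q 0) ^ 2 + dist (p 1) (q 1) ^ 2 := by
    simp [Fin.sum_univ_two]
  rw [e, Real.dist_eq, Real.dist_eq]
  nlinarith [abs_nonneg (p 0 - q 0), abs_nonneg (p 1 - q 1), sq_abs (p 0 - q 0),
    sq_abs (p 1 - q 1)]

lemma geomGraph_walk_dist {ι : Type*} (x : ι → EuclideanSpace ℝ (Fin 2)) {r : ℝ}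
    {a b : ι} (p : (geomGraph x r).Walk a b) : dist (x a) (x b) ≤ p.length * r := by
  induction p with
  | nil => simp
  | cons h p ih =>
      rename_i u v w
      calc dist (x u) (x w) ≤ dist (x u) (x v) + dist (x v) (x w) := dist_triangle _ _ _
        _ ≤ r + p.length * r := add_le_add (show u ≠ v ∧ dist (x u) (x v) < r from h).2.le ih
        _ = (p.length + 1) * r := by ring
        _ = _ := by push_cast [SimpleGraph.Walk.length_cons]; ring

lemma walk_of_close {ι : Type*} (x : ι → EuclideanSpace ℝ (Fin 2)) (r : ℝ) {a b : ι}
    (h : dist (x a) (x b) < r) : ∃ p : (geomGraph x r).Walk a b, p.length ≤ 1 := by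
  by_cases hab : a = b
  · subst hab; exact ⟨.nil, by simp⟩
  · have hadj : (geomGraph x r).Adj a b := And.intro hab h
    exact ⟨.cons hadj .nil, by simp⟩

lemma floor_diff_le {x y : ℝ} : |(⌊x⌋ : ℝ) - (⌊y⌋ : ℝ)| ≤ |x - y| + 1 := by
  have h1 := Int.floor_le x
  have h2 := Int.floor_le y
  have h3 := Int.sub_one_lt_floor x
  have h4 := Int.sub_one_lt_floor y
  have h5 := le_abs_self (x - y)
  have h6 := neg_abs_le (x - y)
  rw [abs_le]; constructor <;> linarith

lemma idx_spec {s y : ℝ} (hs : 0 < s) {k : ℕ} (h0 : 0 ≤ y) (h1 : y < k * s) :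
    (⌊y / s⌋).toNat < k ∧ ((⌊y / s⌋).toNat : ℝ) * s ≤ y ∧ y < (((⌊y / s⌋).toNat : ℝ) + 1) * s
      ∧ ((⌊y / s⌋).toNat : ℝ) = (⌊y / s⌋ : ℝ) := by
  have hy : 0 ≤ y / s := div_nonneg h0 hs.le
  have hfl : (0 : ℤ) ≤ ⌊y / s⌋ := Int.floor_nonneg.2 hy
  have hc : ((⌊y / s⌋.toNat : ℤ)) = ⌊y / s⌋ := Int.toNat_of_nonneg hfl
  have hcr : ((⌊y / s⌋.toNat : ℝ)) = (⌊y / s⌋ : ℝ) := by exact_mod_cast hc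
  have h2 : y / s < (k : ℝ) := (div_lt_iff₀ hs).2 h1
  have hlt : ⌊y / s⌋ < (k : ℤ) := Int.floor_lt.2 (by exact_mod_cast h2)
  refine ⟨by omega, ?_, ?_, hcr⟩
  · rw [hcr]
    have := Int.floor_le (y / s)
    calc (⌊y / s⌋ : ℝ) * s ≤ (y / s) * s := by nlinarith
      _ = y := div_mul_cancel₀ y hs.ne'
  · rw [hcr]
    have := Int.lt_floor_add_one (y / s)
    nlinarith [div_mul_cancel₀ y hs.ne']


set_option maxHeartbeats 2000000 in
/-- There is an absolute constant `α` such that whenever `[0,√n)²` is partitioned into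
square cells of side `r/√5` each containing a point of `V`, the hop-count metric of the
geometric graph `G(V,r)` is `α`-doubling: every ball of radius `2R` (for real `R ≥ 1`)
can be covered by at most `α` balls of radius `R`. -/
theorem geomGraph_doubling_of_full_cells : ∃ α : ℕ,
    ∀ (n : ℕ), 2 ≤ n → ∀ (r : ℝ), 0 < r →
    ∀ k : ℕ, (k : ℝ) * (r / Real.sqrt 5) = Real.sqrt n →
    ∀ V : Finset (EuclideanSpace ℝ (Fin 2)), ↑V ⊆ netSquare n →
    (∀ i < k, ∀ j < k, ∃ p ∈ V, p ∈ cell (r / Real.sqrt 5) i j) →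
    ∀ (u : ↥V) (R : ℝ), 1 ≤ R →
    ∃ s : Finset ↥V, s.card ≤ α ∧
      {v : ↥V | ((geomGraph (fun w : ↥V => (w : EuclideanSpace ℝ (Fin 2))) r).dist u v : ℝ)
          ≤ 2 * R} ⊆
        ⋃ w ∈ s, {v : ↥V |
          ((geomGraph (fun w' : ↥V => (w' : EuclideanSpace ℝ (Fin 2))) r).dist w v : ℝ) ≤ R} := by
  classical
  refine ⟨6561, ?_⟩
  intro n hn r hr k hk V hV hfull u R hR
  set x : ↥V → EuclideanSpace ℝ (Fin 2) := fun w => (w : EuclideanSpace ℝ (Fin 2)) with hxdef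
  set G := geomGraph x r with hGdef
  set s₀ := r / Real.sqrt 5 with hs₀def
  have h5 : (0 : ℝ) < Real.sqrt 5 := Real.sqrt_pos.2 (by norm_num)
  have h5sq : Real.sqrt 5 ^ 2 = 5 := Real.sq_sqrt (by norm_num)
  have h5le : Real.sqrt 5 ≤ 3 := by nlinarith [Real.sqrt_nonneg 5]
  have hs₀ : 0 < s₀ := div_pos hr h5
  have hsq : s₀ ^ 2 = r ^ 2 / 5 := by rw [hs₀def, div_pow, h5sq]
  have hk' : Real.sqrt n = (k : ℝ) * s₀ := hk.symm
  have hmem : ∀ v : ↥V, x v ∈ netSquare n := fun v => hV v.2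
  -- cell indices of a vertex
  have hspec : ∀ (v : ↥V) (c : Fin 2),
      (⌊x v c / s₀⌋).toNat < k ∧ ((⌊x v c / s₀⌋).toNat : ℝ) * s₀ ≤ x v c ∧
      x v c < (((⌊x v c / s₀⌋).toNat : ℝ) + 1) * s₀ ∧
      ((⌊x v c / s₀⌋).toNat : ℝ) = (⌊x v c / s₀⌋ : ℝ) := by
    intro v c
    have hm := hmem v
    fin_cases c
    · exact idx_spec hs₀ hm.1.1 (by rw [← hk']; exact hm.1.2)
    · exact idx_spec hs₀ hm.2.1 (by rw [← hk']; exact hm.2.2)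
  set I : ↥V → ℕ := fun v => (⌊x v 0 / s₀⌋).toNat with hIdef
  set J : ↥V → ℕ := fun v => (⌊x v 1 / s₀⌋).toNat with hJdef
  have hcellV : ∀ v : ↥V, x v ∈ cell s₀ (I v) (J v) := by
    intro v
    exact ⟨⟨(hspec v 0).2.1, (hspec v 0).2.2.1⟩, ⟨(hspec v 1).2.1, (hspec v 1).2.2.1⟩⟩
  have hIlt : ∀ v : ↥V, I v < k := fun v => (hspec v 0).1
  have hJlt : ∀ v : ↥V, J v < k := fun v => (hspec v 1).1
  -- representatives of cells
  choose pt hpt1 hpt2 using hfull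
  set rep : ℕ → ℕ → ↥V := fun i j =>
    if h : i < k ∧ j < k then ⟨pt i h.1 j h.2, hpt1 i h.1 j h.2⟩ else u with hrepdef
  have hrep : ∀ i j, i < k → j < k → x (rep i j) ∈ cell s₀ i j := by
    intro i j hi hj
    have : rep i j = ⟨pt i hi j hj, hpt1 i hi j hj⟩ := by
      rw [hrepdef]; exact dif_pos ⟨hi, hj⟩
    rw [this]
    exact hpt2 i hi j hj
  -- distance facts between cells
  have h1d2 : ∀ (y y' : ℝ) (i i' : ℕ), i' ≤ i + 1 → i ≤ i' + 1 →
      y ∈ Set.Ico ((i : ℝ) * s₀) (((i : ℝ) + 1) * s₀) →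
      y' ∈ Set.Ico ((i' : ℝ) * s₀) (((i' : ℝ) + 1) * s₀) → |y - y'| < 2 * s₀ := by
    intro y y' i i' hii' hi'i hy hy'
    have c1 : (i' : ℝ) ≤ (i : ℝ) + 1 := by exact_mod_cast hii'
    have c2 : (i : ℝ) ≤ (i' : ℝ) + 1 := by exact_mod_cast hi'i
    rw [abs_sub_lt_iff]
    constructor <;> nlinarith [hy.1, hy.2, hy'.1, hy'.2]
  have h1d1 : ∀ (y y' : ℝ) (i : ℕ),
      y ∈ Set.Ico ((i : ℝ) * s₀) (((i : ℝ) + 1) * s₀) →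
      y' ∈ Set.Ico ((i : ℝ) * s₀) (((i : ℝ) + 1) * s₀) → |y - y'| < s₀ := by
    intro y y' i hy hy'
    rw [abs_sub_lt_iff]
    constructor <;> nlinarith [hy.1, hy.2, hy'.1, hy'.2]
  have hsame : ∀ (p q : EuclideanSpace ℝ (Fin 2)) (i j : ℕ),
      p ∈ cell s₀ i j → q ∈ cell s₀ i j → dist p q < r := by
    intro p q i j hp hq
    exact dist_lt_of_coords p q (h1d1 _ _ _ hp.1 hq.1) (h1d1 _ _ _ hp.2 hq.2) hr
      (by nlinarith)
  have hhor : ∀ (p q : EuclideanSpace ℝ (Fin 2)) (i j : ℕ),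
      p ∈ cell s₀ i j → q ∈ cell s₀ (i + 1) j → dist p q < r := by
    intro p q i j hp hq
    have hq1 : q 0 ∈ Set.Ico (((i + 1 : ℕ) : ℝ) * s₀) ((((i + 1 : ℕ) : ℝ) + 1) * s₀) := hq.1
    refine dist_lt_of_coords p q (a := 2 * s₀) (b := s₀)
      (h1d2 _ _ i (i + 1) (by omega) (by omega) hp.1 hq1)
      (h1d1 _ _ _ hp.2 hq.2) hr (by nlinarith)
  have hver : ∀ (p q : EuclideanSpace ℝ (Fin 2)) (i j : ℕ),
      p ∈ cell s₀ i j → q ∈ cell s₀ i (j + 1) → dist p q < r := by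
    intro p q i j hp hq
    have hq1 : q 1 ∈ Set.Ico (((j + 1 : ℕ) : ℝ) * s₀) ((((j + 1 : ℕ) : ℝ) + 1) * s₀) := hq.2
    refine dist_lt_of_coords p q (a := s₀) (b := 2 * s₀)
      (h1d1 _ _ _ hp.1 hq.1)
      (h1d2 _ _ j (j + 1) (by omega) (by omega) hp.2 hq1) hr (by nlinarith)
  -- horizontal chains
  have hor : ∀ (m i j : ℕ), i + m < k → j < k →
      ∃ p : G.Walk (rep i j) (rep (i + m) j), p.length ≤ m := by
    intro m
    induction m with
    | zero => intro i j hi hj; exact ⟨.nil, by simp⟩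
    | succ m ih =>
        intro i j hi hj
        obtain ⟨p, hp⟩ := ih i j (by omega) hj
        obtain ⟨q, hq⟩ := walk_of_close x r
          (hhor _ _ (i + m) j (hrep (i + m) j (by omega) hj) (hrep (i + m + 1) j (by omega) hj))
        exact ⟨p.append q, by rw [SimpleGraph.Walk.length_append]; omega⟩
  have ver : ∀ (m i j : ℕ), j + m < k → i < k →
      ∃ p : G.Walk (rep i j) (rep i (j + m)), p.length ≤ m := by
    intro m
    induction m with
    | zero => intro i j hi hj; exact ⟨.nil, by simp⟩
    | succ m ih =>
        intro i j hi hj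
        obtain ⟨p, hp⟩ := ih i j (by omega) hj
        obtain ⟨q, hq⟩ := walk_of_close x r
          (hver _ _ i (j + m) (hrep i (j + m) hj (by omega)) (hrep i (j + m + 1) hj (by omega)))
        exact ⟨p.append q, by rw [SimpleGraph.Walk.length_append]; omega⟩
  have hor2 : ∀ (i i' j : ℕ), i < k → i' < k → j < k →
      ∃ p : G.Walk (rep i j) (rep i' j), (p.length : ℝ) ≤ |(i : ℝ) - (i' : ℝ)| := by
    intro i i' j hi hi' hj
    rcases le_total i i' with h | h
    · obtain ⟨p, hp⟩ := hor (i' - i) i j (by omega) hj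
      have e : rep (i + (i' - i)) j = rep i' j := by
        rw [show i + (i' - i) = i' from by omega]
      refine ⟨p.copy rfl e, ?_⟩
      rw [SimpleGraph.Walk.length_copy]
      calc (p.length : ℝ) ≤ ((i' - i : ℕ) : ℝ) := by exact_mod_cast hp
        _ = (i' : ℝ) - (i : ℝ) := by rw [Nat.cast_sub h]
        _ ≤ |(i : ℝ) - (i' : ℝ)| := by rw [abs_sub_comm]; exact le_abs_self _
    · obtain ⟨p, hp⟩ := hor (i - i') i' j (by omega) hj
      have e : rep (i' + (i - i')) j = rep i j := by
        rw [show i' + (i - i') = i from by omega]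
      refine ⟨(p.copy rfl e).reverse, ?_⟩
      rw [SimpleGraph.Walk.length_reverse, SimpleGraph.Walk.length_copy]
      calc (p.length : ℝ) ≤ ((i - i' : ℕ) : ℝ) := by exact_mod_cast hp
        _ = (i : ℝ) - (i' : ℝ) := by rw [Nat.cast_sub h]
        _ ≤ |(i : ℝ) - (i' : ℝ)| := le_abs_self _
  have ver2 : ∀ (j j' i : ℕ), j < k → j' < k → i < k →
      ∃ p : G.Walk (rep i j) (rep i j'), (p.length : ℝ) ≤ |(j : ℝ) - (j' : ℝ)| := by
    intro j j' i hj hj' hi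
    rcases le_total j j' with h | h
    · obtain ⟨p, hp⟩ := ver (j' - j) i j (by omega) hi
      have e : rep i (j + (j' - j)) = rep i j' := by
        rw [show j + (j' - j) = j' from by omega]
      refine ⟨p.copy rfl e, ?_⟩
      rw [SimpleGraph.Walk.length_copy]
      calc (p.length : ℝ) ≤ ((j' - j : ℕ) : ℝ) := by exact_mod_cast hp
        _ = (j' : ℝ) - (j : ℝ) := by rw [Nat.cast_sub h]
        _ ≤ |(j : ℝ) - (j' : ℝ)| := by rw [abs_sub_comm]; exact le_abs_self _
    · obtain ⟨p, hp⟩ := ver (j - j') i j' (by omega) hi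
      have e : rep i (j' + (j - j')) = rep i j := by
        rw [show j' + (j - j') = j from by omega]
      refine ⟨(p.copy rfl e).reverse, ?_⟩
      rw [SimpleGraph.Walk.length_reverse, SimpleGraph.Walk.length_copy]
      calc (p.length : ℝ) ≤ ((j - j' : ℕ) : ℝ) := by exact_mod_cast hp
        _ = (j : ℝ) - (j' : ℝ) := by rw [Nat.cast_sub h]
        _ ≤ |(j : ℝ) - (j' : ℝ)| := le_abs_self _
  -- key upper bound
  have hidx0 : ∀ v w : ↥V, |(I v : ℝ) - (I w : ℝ)| ≤ |x v 0 - x w 0| / s₀ + 1 := by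
    intro v w
    have e1 := (hspec v 0).2.2.2
    have e2 := (hspec w 0).2.2.2
    have h := floor_diff_le (x := x v 0 / s₀) (y := x w 0 / s₀)
    rw [← sub_div, abs_div, abs_of_pos hs₀] at h
    calc |(I v : ℝ) - (I w : ℝ)| = |(⌊x v 0 / s₀⌋ : ℝ) - (⌊x w 0 / s₀⌋ : ℝ)| := by
          rw [show (I v : ℝ) = (⌊x v 0 / s₀⌋ : ℝ) from e1,
            show (I w : ℝ) = (⌊x w 0 / s₀⌋ : ℝ) from e2]
      _ ≤ _ := h
  have hidx1 : ∀ v w : ↥V, |(J v : ℝ) - (J w : ℝ)| ≤ |x v 1 - x w 1| / s₀ + 1 := by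
    intro v w
    have e1 := (hspec v 1).2.2.2
    have e2 := (hspec w 1).2.2.2
    have h := floor_diff_le (x := x v 1 / s₀) (y := x w 1 / s₀)
    rw [← sub_div, abs_div, abs_of_pos hs₀] at h
    calc |(J v : ℝ) - (J w : ℝ)| = |(⌊x v 1 / s₀⌋ : ℝ) - (⌊x w 1 / s₀⌋ : ℝ)| := by
          rw [show (J v : ℝ) = (⌊x v 1 / s₀⌋ : ℝ) from e1,
            show (J w : ℝ) = (⌊x w 1 / s₀⌋ : ℝ) from e2]
      _ ≤ _ := h
  have key : ∀ a b : ↥V, ∃ p : G.Walk a b,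
      (p.length : ℝ) ≤ |x a 0 - x b 0| / s₀ + |x a 1 - x b 1| / s₀ + 4 := by
    intro a b
    obtain ⟨p₁, hp₁⟩ := walk_of_close x r
      (hsame _ _ (I a) (J a) (hcellV a) (hrep (I a) (J a) (hIlt a) (hJlt a)))
    obtain ⟨p₂, hp₂⟩ := hor2 (I a) (I b) (J a) (hIlt a) (hIlt b) (hJlt a)
    obtain ⟨p₃, hp₃⟩ := ver2 (J a) (J b) (I b) (hJlt a) (hJlt b) (hIlt b)
    obtain ⟨p₄, hp₄⟩ := walk_of_close x r
      (hsame _ _ (I b) (J b) (hrep (I b) (J b) (hIlt b) (hJlt b)) (hcellV b))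
    refine ⟨((p₁.append p₂).append p₃).append p₄, ?_⟩
    have hl : (((p₁.append p₂).append p₃).append p₄).length
        = p₁.length + p₂.length + p₃.length + p₄.length := by
      simp [SimpleGraph.Walk.length_append]
    rw [hl]
    push_cast
    have b1 : (p₁.length : ℝ) ≤ 1 := by exact_mod_cast hp₁
    have b4 : (p₄.length : ℝ) ≤ 1 := by exact_mod_cast hp₄
    have b2 := hp₂.trans (hidx0 a b)
    have b3 := hp₃.trans (hidx1 a b)
    linarith
  have hreach : ∀ a b : ↥V, G.Reachable a b := fun a b => ⟨(key a b).choose⟩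
  have hlow : ∀ a b : ↥V, dist (x a) (x b) ≤ (G.dist a b : ℝ) * r := by
    intro a b
    obtain ⟨p, hp⟩ := (hreach a b).exists_walk_length_eq_dist
    have h := geomGraph_walk_dist x (r := r) p
    rw [hp] at h
    exact h
  have hup : ∀ a b : ↥V,
      (G.dist a b : ℝ) ≤ |x a 0 - x b 0| / s₀ + |x a 1 - x b 1| / s₀ + 4 := by
    intro a b
    obtain ⟨p, hp⟩ := key a b
    have h := SimpleGraph.dist_le p
    calc (G.dist a b : ℝ) ≤ (p.length : ℝ) := by exact_mod_cast h
      _ ≤ _ := hp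
  -- the doubling argument
  set t := max s₀ (R * r / 20) with htdef
  have hts : s₀ ≤ t := le_max_left _ _
  have htR : R * r / 20 ≤ t := le_max_right _ _
  have ht : 0 < t := lt_of_lt_of_le hs₀ hts
  have hflooreq : ∀ y y' : ℝ, ⌊y / t⌋ = ⌊y' / t⌋ → |y - y'| < t := by
    intro y y' h
    have h1 := Int.lt_floor_add_one (y / t)
    have h2 := Int.floor_le (y / t)
    have h3 := Int.lt_floor_add_one (y' / t)
    have h4 := Int.floor_le (y' / t)
    rw [h] at h1 h2
    have ey : y / t * t = y := div_mul_cancel₀ y ht.ne'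
    have ey' : y' / t * t = y' := div_mul_cancel₀ y' ht.ne'
    rw [abs_sub_lt_iff]
    constructor <;> nlinarith
  have claim1 : ∀ v w : ↥V, ⌊x v 0 / t⌋ = ⌊x w 0 / t⌋ → ⌊x v 1 / t⌋ = ⌊x w 1 / t⌋ →
      (G.dist v w : ℝ) ≤ R := by
    intro v w h0 h1
    have d0 := hflooreq _ _ h0
    have d1 := hflooreq _ _ h1
    rcases le_total (R * r / 20) s₀ with hc | hc
    · have htt : t = s₀ := max_eq_left hc
      rw [htt] at d0 d1
      have hclose : dist (x v) (x w) < r :=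
        dist_lt_of_coords _ _ d0 d1 hr (by nlinarith [sq_nonneg r])
      obtain ⟨p, hp⟩ := walk_of_close x r hclose
      have h := SimpleGraph.dist_le p
      calc (G.dist v w : ℝ) ≤ (p.length : ℝ) := by exact_mod_cast h
        _ ≤ 1 := by exact_mod_cast hp
        _ ≤ R := hR
    · have htt : t = R * r / 20 := max_eq_right hc
      rw [htt] at d0 d1
      have hR5 : 20 ≤ R * Real.sqrt 5 := by
        rw [hs₀def] at hc
        have h' : (r / Real.sqrt 5) * Real.sqrt 5 = r := div_mul_cancel₀ r h5.ne'
        nlinarith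
      have hd0 : |x v 0 - x w 0| / s₀ < R * Real.sqrt 5 / 20 := by
        rw [hs₀def]
        rw [div_lt_iff₀ (div_pos hr h5)]
        have : R * Real.sqrt 5 / 20 * (r / Real.sqrt 5) = R * r / 20 := by
          field_simp
        rw [this]; exact d0
      have hd1 : |x v 1 - x w 1| / s₀ < R * Real.sqrt 5 / 20 := by
        rw [hs₀def]
        rw [div_lt_iff₀ (div_pos hr h5)]
        have : R * Real.sqrt 5 / 20 * (r / Real.sqrt 5) = R * r / 20 := by
          field_simp
        rw [this]; exact d1
      have h := hup v w
      nlinarith [hR5, h5le, h5, hR]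
  -- the covering
  set B : Finset ↥V := Finset.univ.filter (fun v => (G.dist u v : ℝ) ≤ 2 * R) with hBdef
  set g : ↥V → ℤ × ℤ := fun v => (⌊x v 0 / t⌋, ⌊x v 1 / t⌋) with hgdef
  have hBsub : B.image g ⊆
      Finset.Icc (⌊x u 0 / t⌋ - 40) (⌊x u 0 / t⌋ + 40) ×ˢ
      Finset.Icc (⌊x u 1 / t⌋ - 40) (⌊x u 1 / t⌋ + 40) := by
    intro z hz
    obtain ⟨v, hvB, rfl⟩ := Finset.mem_image.1 hz
    have hvd : (G.dist u v : ℝ) ≤ 2 * R := (Finset.mem_filter.1 hvB).2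
    have hE : dist (x u) (x v) ≤ 40 * t := by
      calc dist (x u) (x v) ≤ (G.dist u v : ℝ) * r := hlow u v
        _ ≤ 2 * R * r := by nlinarith [(G.dist u v : ℝ), hr]
        _ ≤ 40 * t := by linarith
    have hcoord : ∀ c : Fin 2,
        ⌊x u c / t⌋ - 40 ≤ ⌊x v c / t⌋ ∧ ⌊x v c / t⌋ ≤ ⌊x u c / t⌋ + 40 := by
      intro c
      have h := (coord_abs_le_dist (x u) (x v) c).trans hE
      rw [abs_le] at h
      constructor
      · have h' : x u c / t - 40 ≤ x v c / t := by
          rw [sub_le_iff_le_add, div_le_iff₀ ht, add_mul, div_mul_cancel₀ _ ht.ne']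
          linarith
        have := Int.floor_le_floor h'
        rwa [show x u c / t - 40 = x u c / t - ((40 : ℤ) : ℝ) from by norm_num,
          Int.floor_sub_intCast] at this
      · have h' : x v c / t ≤ x u c / t + 40 := by
          rw [div_le_iff₀ ht, add_mul, div_mul_cancel₀ _ ht.ne']
          linarith
        have := Int.floor_le_floor h'
        rwa [show x u c / t + 40 = x u c / t + ((40 : ℤ) : ℝ) from by norm_num,
          Int.floor_add_intCast] at this
    rw [Finset.mem_product, Finset.mem_Icc, Finset.mem_Icc]
    exact ⟨⟨(hcoord 0).1, (hcoord 0).2⟩, ⟨(hcoord 1).1, (hcoord 1).2⟩⟩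
  have hcard : (B.image g).card ≤ 6561 := by
    have h := Finset.card_le_card hBsub
    rw [Finset.card_product, Int.card_Icc, Int.card_Icc,
      show ⌊x u 0 / t⌋ + 40 + 1 - (⌊x u 0 / t⌋ - 40) = 81 from by ring,
      show ⌊x u 1 / t⌋ + 40 + 1 - (⌊x u 1 / t⌋ - 40) = 81 from by ring] at h
    norm_num at h
    exact h
  set ctr : ℤ × ℤ → ↥V := fun z => if h : ∃ w ∈ B, g w = z then h.choose else u with hcdef
  refine ⟨(B.image g).image ctr, le_trans Finset.card_image_le hcard, ?_⟩
  intro v hv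
  have hvB : v ∈ B := Finset.mem_filter.2 ⟨Finset.mem_univ v, hv⟩
  have hex : ∃ w ∈ B, g w = g v := ⟨v, hvB, rfl⟩
  have hc1 : ctr (g v) = hex.choose := dif_pos hex
  obtain ⟨hcB, hcg⟩ := hex.choose_spec
  refine Set.mem_iUnion₂.2 ⟨ctr (g v), ?_, ?_⟩
  · exact Finset.mem_image_of_mem ctr (Finset.mem_image_of_mem g hvB)
  · show (G.dist (ctr (g v)) v : ℝ) ≤ R
    rw [hc1]
    have e0 : ⌊x hex.choose 0 / t⌋ = ⌊x v 0 / t⌋ := congrArg Prod.fst hcg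
    have e1 : ⌊x hex.choose 1 / t⌋ = ⌊x v 1 / t⌋ := congrArg Prod.snd hcg
    exact claim1 _ _ e0 e1
end

section
/- Let n ≥ 2, r > 0, and partition the square [0,√n)² into congruent square cells of side r/√5 (assume √5·√n/r is an integer). Let V ⊆ [0,√n)² be a finite set of points such that every cell contains at least one point of V, and let d_G be the shortest-path (hop-count) distance of the geometric graph G(V,r). Then for all u, v ∈ V: ‖u − v‖ ≤ r·d_G(u,v), and d_G(u,v) ≤ √5·‖u − v‖₁/r + 2 ≤ √10·‖u − v‖/r + 2, where ‖·‖ is the Euclidean norm and ‖·‖₁ the ℓ₁-norm on ℝ². -/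
/- ### Auxiliary lemmas -/

lemma natDist_real (i i' : ℕ) : (Nat.dist i i' : ℝ) = |(i : ℝ) - i'| := by
  rcases le_total i i' with h | h
  · rw [Nat.dist_eq_sub_of_le h, Nat.cast_sub h, abs_sub_comm,
      abs_of_nonneg (by simp [Nat.cast_le.mpr h])]
  · rw [Nat.dist_eq_sub_of_le_right h, Nat.cast_sub h,
      abs_of_nonneg (by simp [Nat.cast_le.mpr h])]

lemma coord_bound {s x y : ℝ} (hs : 0 < s) {i i' : ℕ}
    (hx : x ∈ Set.Ico ((i : ℝ) * s) (((i : ℝ) + 1) * s))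
    (hy : y ∈ Set.Ico ((i' : ℝ) * s) (((i' : ℝ) + 1) * s)) :
    |x - y| < ((Nat.dist i i' : ℝ) + 1) * s := by
  obtain ⟨h1, h2⟩ := hx
  obtain ⟨h3, h4⟩ := hy
  rw [natDist_real]
  have h5 := le_abs_self ((i : ℝ) - i')
  have h6 := neg_abs_le ((i : ℝ) - i')
  rw [abs_lt]
  constructor <;> nlinarith

lemma coord_bound' {s x y : ℝ} (hs : 0 < s) {i i' : ℕ}
    (hx : x ∈ Set.Ico ((i : ℝ) * s) (((i : ℝ) + 1) * s))
    (hy : y ∈ Set.Ico ((i' : ℝ) * s) (((i' : ℝ) + 1) * s)) :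
    (Nat.dist i i' : ℝ) * s ≤ |x - y| + s := by
  obtain ⟨h1, h2⟩ := hx
  obtain ⟨h3, h4⟩ := hy
  rw [natDist_real]
  have h5 := le_abs_self (x - y)
  have h6 := neg_abs_le (x - y)
  rcases abs_cases ((i : ℝ) - i') with ⟨he, _⟩ | ⟨he, _⟩ <;> rw [he] <;> nlinarith

lemma cell_dist_lt {s : ℝ} (hs : 0 < s) {p q : EuclideanSpace ℝ (Fin 2)}
    {i j i' j' : ℕ} (hp : p ∈ cell s i j) (hq : q ∈ cell s i' j')
    (h : Nat.dist i i' + Nat.dist j j' ≤ 1) :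
    dist p q < Real.sqrt 5 * s := by
  have h0 : |p 0 - q 0| < ((Nat.dist i i' : ℝ) + 1) * s := coord_bound hs hp.1 hq.1
  have h1 : |p 1 - q 1| < ((Nat.dist j j' : ℝ) + 1) * s := coord_bound hs hp.2 hq.2
  have hab : (Nat.dist i i' : ℝ) + (Nat.dist j j' : ℝ) ≤ 1 := by exact_mod_cast h
  have ha : (0:ℝ) ≤ (Nat.dist i i' : ℝ) := Nat.cast_nonneg _
  have hb : (0:ℝ) ≤ (Nat.dist j j' : ℝ) := Nat.cast_nonneg _
  have e0 : |p 0 - q 0| ^ 2 < (((Nat.dist i i' : ℝ) + 1) * s) ^ 2 :=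
    pow_lt_pow_left₀ h0 (abs_nonneg _) (by norm_num)
  have e1 : |p 1 - q 1| ^ 2 < (((Nat.dist j j' : ℝ) + 1) * s) ^ 2 :=
    pow_lt_pow_left₀ h1 (abs_nonneg _) (by norm_num)
  have hsq : dist p q ^ 2 < 5 * s ^ 2 := by
    rw [EuclideanSpace.dist_eq, Real.sq_sqrt (by positivity)]
    simp only [Fin.sum_univ_two, Real.dist_eq]
    have hcase : (Nat.dist i i' = 0 ∧ Nat.dist j j' = 0) ∨
        (Nat.dist i i' = 1 ∧ Nat.dist j j' = 0) ∨
        (Nat.dist i i' = 0 ∧ Nat.dist j j' = 1) := by omega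
    rcases hcase with ⟨hc1, hc2⟩ | ⟨hc1, hc2⟩ | ⟨hc1, hc2⟩ <;>
      rw [hc1] at e0 <;> rw [hc2] at e1 <;> push_cast at e0 e1 <;> nlinarith [sq_nonneg s]
  have : dist p q < Real.sqrt (5 * s ^ 2) := by
    rw [← Real.sqrt_sq dist_nonneg]
    exact Real.sqrt_lt_sqrt (sq_nonneg _) hsq
  calc dist p q < Real.sqrt (5 * s ^ 2) := this
    _ = Real.sqrt 5 * s := by
        rw [Real.sqrt_mul (by norm_num), Real.sqrt_sq hs.le]

lemma idx_le {s x : ℝ} (hs : 0 < s) {i i' : ℕ}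
    (h : (i : ℝ) * s ≤ x) (h' : x < ((i' : ℝ) + 1) * s) : i ≤ i' := by
  have : (i : ℝ) < (i' : ℝ) + 1 := by nlinarith
  have : (i : ℝ) < ((i' + 1 : ℕ) : ℝ) := by push_cast; linarith
  have := Nat.cast_lt.mp this
  omega

lemma idx_unique {s : ℝ} (hs : 0 < s) {p : EuclideanSpace ℝ (Fin 2)} {i j i' j' : ℕ}
    (h1 : p ∈ cell s i j) (h2 : p ∈ cell s i' j') : i = i' ∧ j = j' :=
  ⟨le_antisymm (idx_le hs h1.1.1 h2.1.2) (idx_le hs h2.1.1 h1.1.2),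
   le_antisymm (idx_le hs h1.2.1 h2.2.2) (idx_le hs h2.2.1 h1.2.2)⟩

lemma exists_idx {s x : ℝ} (hs : 0 < s) {k : ℕ} (h0 : 0 ≤ x) (h1 : x < (k : ℝ) * s) :
    ∃ i < k, x ∈ Set.Ico ((i : ℝ) * s) (((i : ℝ) + 1) * s) := by
  refine ⟨⌊x / s⌋.toNat, ?_, ?_, ?_⟩
  · have hle : (⌊x / s⌋ : ℝ) ≤ x / s := Int.floor_le _
    have : (⌊x / s⌋ : ℝ) < (k : ℝ) := lt_of_le_of_lt hle ((div_lt_iff₀ hs).mpr h1)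
    have h2 : ⌊x / s⌋ < (k : ℤ) := by exact_mod_cast this
    have hnn : (0 : ℤ) ≤ ⌊x / s⌋ := Int.floor_nonneg.mpr (div_nonneg h0 hs.le)
    omega
  · have hnn : (0 : ℤ) ≤ ⌊x / s⌋ := Int.floor_nonneg.mpr (div_nonneg h0 hs.le)
    have hfl : ((⌊x / s⌋.toNat : ℕ) : ℝ) = (⌊x / s⌋ : ℝ) := by exact_mod_cast Int.toNat_of_nonneg hnn
    have hle : (⌊x / s⌋ : ℝ) ≤ x / s := Int.floor_le _
    rw [hfl]
    calc (⌊x / s⌋ : ℝ) * s ≤ (x / s) * s := by nlinarith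
      _ = x := div_mul_cancel₀ x hs.ne'
  · have hnn : (0 : ℤ) ≤ ⌊x / s⌋ := Int.floor_nonneg.mpr (div_nonneg h0 hs.le)
    have hfl : ((⌊x / s⌋.toNat : ℕ) : ℝ) = (⌊x / s⌋ : ℝ) := by exact_mod_cast Int.toNat_of_nonneg hnn
    have hlt : x / s < ⌊x / s⌋ + 1 := Int.lt_floor_add_one _
    rw [hfl]
    have := (div_lt_iff₀ hs).mp hlt
    nlinarith

lemma ne_of_cell_ne {s : ℝ} (hs : 0 < s) {V : Finset (EuclideanSpace ℝ (Fin 2))}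
    {a b : ↥V} {ia ja ib jb : ℕ} (ha : (a : EuclideanSpace ℝ (Fin 2)) ∈ cell s ia ja)
    (hb : (b : EuclideanSpace ℝ (Fin 2)) ∈ cell s ib jb)
    (h : ¬(ia = ib ∧ ja = jb)) : a ≠ b := by
  intro he
  rw [he] at ha
  exact h (idx_unique hs ha hb)

lemma walk_exists {V : Finset (EuclideanSpace ℝ (Fin 2))} {r s : ℝ} (hs : 0 < s)
    (hrs : Real.sqrt 5 * s ≤ r) {k : ℕ}
    (hfull : ∀ i < k, ∀ j < k, ∃ p ∈ V, p ∈ cell s i j) :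
    ∀ m : ℕ, ∀ (a b : ↥V) (ia ja ib jb : ℕ), ia < k → ja < k → ib < k → jb < k →
      (a : EuclideanSpace ℝ (Fin 2)) ∈ cell s ia ja →
      (b : EuclideanSpace ℝ (Fin 2)) ∈ cell s ib jb →
      Nat.dist ia ib + Nat.dist ja jb = m →
      ∃ p : (geomGraph (fun w : ↥V => (w : EuclideanSpace ℝ (Fin 2))) r).Walk a b,
        p.length ≤ max m 1 := by
  intro m
  induction m using Nat.strong_induction_on with
  | _ m ih =>
    intro a b ia ja ib jb hia hja hib hjb ha hb hm
    set G := geomGraph (fun w : ↥V => (w : EuclideanSpace ℝ (Fin 2))) r with hG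
    have adj : ∀ (c d : ↥V) (ic jc id jd : ℕ),
        (c : EuclideanSpace ℝ (Fin 2)) ∈ cell s ic jc →
        (d : EuclideanSpace ℝ (Fin 2)) ∈ cell s id jd →
        Nat.dist ic id + Nat.dist jc jd ≤ 1 → c ≠ d → G.Adj c d := by
      intro c d ic jc id jd hc hd hle hne
      exact ⟨hne, lt_of_lt_of_le (cell_dist_lt hs hc hd hle) hrs⟩
    match m, hm with
    | 0, hm =>
      rcases eq_or_ne a b with he | hne
      · subst he; exact ⟨SimpleGraph.Walk.nil, by simp⟩
      · exact ⟨(adj a b ia ja ib jb ha hb (by omega) hne).toWalk, by simp⟩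
    | 1, hm =>
      have hne : a ≠ b := ne_of_cell_ne hs ha hb (by
        rintro ⟨h1, h2⟩; subst h1; subst h2; simp [Nat.dist] at hm)
      exact ⟨(adj a b ia ja ib jb ha hb (by omega) hne).toWalk, by simp⟩
    | (m + 2), hm =>
      have step : ∃ ic jc, ic < k ∧ jc < k ∧ Nat.dist ia ic + Nat.dist ja jc = 1 ∧
          Nat.dist ic ib + Nat.dist jc jb = m + 1 := by
        rcases Nat.lt_or_ge ia ib with h | h
        · exact ⟨ia + 1, ja, by omega, hja, by simp [Nat.dist], by simp [Nat.dist] at hm ⊢; omega⟩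
        · rcases Nat.lt_or_ge ib ia with h' | h'
          · exact ⟨ia - 1, ja, by omega, hja, by simp [Nat.dist]; omega,
              by simp [Nat.dist] at hm ⊢; omega⟩
          · have hij : ia = ib := le_antisymm h' h
            rcases Nat.lt_or_ge ja jb with h2 | h2
            · exact ⟨ia, ja + 1, hia, by omega, by simp [Nat.dist], by
                simp [Nat.dist] at hm ⊢; omega⟩
            · have h3 : jb < ja := by
                rcases Nat.lt_or_ge jb ja with h4 | h4
                · exact h4
                · exfalso; have : ja = jb := le_antisymm h4 h2
                  subst hij; subst this; simp [Nat.dist] at hm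
              exact ⟨ia, ja - 1, hia, by omega, by simp [Nat.dist]; omega, by
                simp [Nat.dist] at hm ⊢; omega⟩
      obtain ⟨ic, jc, hic, hjc, hstep1, hstep2⟩ := step
      obtain ⟨c, hcV, hc⟩ := hfull ic hic jc hjc
      have hne : a ≠ (⟨c, hcV⟩ : ↥V) := ne_of_cell_ne hs ha hc (by
        rintro ⟨h1, h2⟩; subst h1; subst h2; simp [Nat.dist] at hstep1)
      have hadj := adj a ⟨c, hcV⟩ ia ja ic jc ha hc (le_of_eq hstep1) hne
      obtain ⟨q, hq⟩ := ih (m + 1) (by omega) ⟨c, hcV⟩ b ic jc ib jb hic hjc hib hjb hc hb hstep2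
      refine ⟨SimpleGraph.Walk.cons hadj q, ?_⟩
      simp only [SimpleGraph.Walk.length_cons]
      omega

lemma norm_le_walk {V : Finset (EuclideanSpace ℝ (Fin 2))} {r : ℝ} (hr : 0 ≤ r)
    {a b : ↥V} (p : (geomGraph (fun w : ↥V => (w : EuclideanSpace ℝ (Fin 2))) r).Walk a b) :
    ‖(a : EuclideanSpace ℝ (Fin 2)) - (b : EuclideanSpace ℝ (Fin 2))‖ ≤ r * p.length := by
  induction p with
  | nil => simp
  | @cons a c b h q ih =>
    have h1 : ‖(a : EuclideanSpace ℝ (Fin 2)) - (b : EuclideanSpace ℝ (Fin 2))‖ ≤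
        dist (a : EuclideanSpace ℝ (Fin 2)) (c : EuclideanSpace ℝ (Fin 2)) +
        ‖(c : EuclideanSpace ℝ (Fin 2)) - (b : EuclideanSpace ℝ (Fin 2))‖ := by
      rw [← dist_eq_norm, ← dist_eq_norm]
      exact dist_triangle _ _ _
    have h2 : dist (a : EuclideanSpace ℝ (Fin 2)) (c : EuclideanSpace ℝ (Fin 2)) < r := h.2
    simp only [SimpleGraph.Walk.length_cons]
    push_cast
    calc ‖(a : EuclideanSpace ℝ (Fin 2)) - (b : EuclideanSpace ℝ (Fin 2))‖ ≤
        dist (a : EuclideanSpace ℝ (Fin 2)) (c : EuclideanSpace ℝ (Fin 2)) +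
        ‖(c : EuclideanSpace ℝ (Fin 2)) - (b : EuclideanSpace ℝ (Fin 2))‖ := h1
      _ ≤ r + r * q.length := add_le_add h2.le ih
      _ = r * (q.length + 1) := by ring

/-- If every cell of side `r/√5` of the square `[0,√n)²` contains a point of `V`, then the
hop distance of `G(V,r)` is sandwiched between the Euclidean distance over `r` and
`√5·ℓ₁-distance/r + 2 ≤ √10·Euclidean distance/r + 2`. -/
theorem hopDist_vs_euclidean (n : ℕ) (hn : 2 ≤ n) (r : ℝ) (hr : 0 < r)
    (k : ℕ) (hk : (k : ℝ) * (r / Real.sqrt 5) = Real.sqrt n)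
    (V : Finset (EuclideanSpace ℝ (Fin 2))) (hV : ↑V ⊆ netSquare n)
    (hfull : ∀ i < k, ∀ j < k, ∃ p ∈ V, p ∈ cell (r / Real.sqrt 5) i j)
    (u v : ↥V) :
    ‖(u : EuclideanSpace ℝ (Fin 2)) - (v : EuclideanSpace ℝ (Fin 2))‖ ≤
        r * ((geomGraph (fun w : ↥V => (w : EuclideanSpace ℝ (Fin 2))) r).dist u v : ℝ) ∧
      ((geomGraph (fun w : ↥V => (w : EuclideanSpace ℝ (Fin 2))) r).dist u v : ℝ) ≤
        Real.sqrt 5 * (|(u : EuclideanSpace ℝ (Fin 2)) 0 - (v : EuclideanSpace ℝ (Fin 2)) 0| +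
          |(u : EuclideanSpace ℝ (Fin 2)) 1 - (v : EuclideanSpace ℝ (Fin 2)) 1|) / r + 2 ∧
      Real.sqrt 5 * (|(u : EuclideanSpace ℝ (Fin 2)) 0 - (v : EuclideanSpace ℝ (Fin 2)) 0| +
          |(u : EuclideanSpace ℝ (Fin 2)) 1 - (v : EuclideanSpace ℝ (Fin 2)) 1|) / r + 2 ≤
        Real.sqrt 10 *
          ‖(u : EuclideanSpace ℝ (Fin 2)) - (v : EuclideanSpace ℝ (Fin 2))‖ / r + 2 := by
  have hsqrt5 : (0:ℝ) < Real.sqrt 5 := Real.sqrt_pos.mpr (by norm_num)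
  set s : ℝ := r / Real.sqrt 5 with hsdef
  have hs : 0 < s := div_pos hr hsqrt5
  have hrs : Real.sqrt 5 * s = r := by
    rw [hsdef]; field_simp
  set G := geomGraph (fun w : ↥V => (w : EuclideanSpace ℝ (Fin 2))) r with hG
  -- find cells for u and v
  have hcoords : ∀ w : ↥V, ∃ i < k, ∃ j < k,
      (w : EuclideanSpace ℝ (Fin 2)) ∈ cell s i j := by
    intro w
    obtain ⟨⟨h00, h01⟩, ⟨h10, h11⟩⟩ := hV w.2
    rw [← hk] at h01 h11
    obtain ⟨i, hi, hmem0⟩ := exists_idx hs h00 h01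
    obtain ⟨j, hj, hmem1⟩ := exists_idx hs h10 h11
    exact ⟨i, hi, j, hj, hmem0, hmem1⟩
  obtain ⟨iu, hiu, ju, hju, hu⟩ := hcoords u
  obtain ⟨iv, hiv, jv, hjv, hv'⟩ := hcoords v
  set m : ℕ := Nat.dist iu iv + Nat.dist ju jv with hmdef
  obtain ⟨p, hp⟩ := walk_exists hs hrs.le hfull m u v iu ju iv jv hiu hju hiv hjv hu hv' rfl
  set L : ℝ := |(u : EuclideanSpace ℝ (Fin 2)) 0 - (v : EuclideanSpace ℝ (Fin 2)) 0| +
      |(u : EuclideanSpace ℝ (Fin 2)) 1 - (v : EuclideanSpace ℝ (Fin 2)) 1| with hLdef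
  have hL0 : 0 ≤ L := by positivity
  have hdist_le : G.dist u v ≤ max m 1 := le_trans (SimpleGraph.dist_le p) hp
  refine ⟨?_, ?_, ?_⟩
  · -- lower bound
    rcases eq_or_ne u v with he | hne
    · subst he; simp only [sub_self, norm_zero]; positivity
    · have hreach : G.Reachable u v := p.reachable
      obtain ⟨q, hq⟩ := hreach.exists_walk_length_eq_dist
      calc ‖(u : EuclideanSpace ℝ (Fin 2)) - (v : EuclideanSpace ℝ (Fin 2))‖ ≤
          r * q.length := norm_le_walk hr.le q
        _ = r * (G.dist u v : ℝ) := by rw [hq]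
  · -- upper bound via ℓ₁
    have key : ((max m 1 : ℕ) : ℝ) ≤ L / s + 2 := by
      have hms : (m : ℝ) * s ≤ L + 2 * s := by
        have b1 := coord_bound' hs hu.1 hv'.1
        have b2 := coord_bound' hs hu.2 hv'.2
        rw [hmdef]
        push_cast
        nlinarith
      have hm2 : (m : ℝ) ≤ L / s + 2 := by
        rw [div_add' _ _ _ hs.ne', le_div_iff₀ hs]
        nlinarith
      have h12 : (1 : ℝ) ≤ L / s + 2 := by
        have : 0 ≤ L / s := div_nonneg hL0 hs.le
        linarith
      rcases Nat.le_total m 1 with h | h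
      · rw [Nat.max_eq_right h]; exact_mod_cast h12
      · rw [Nat.max_eq_left h]; exact hm2
    have hLs : L / s = Real.sqrt 5 * L / r := by
      rw [hsdef]
      field_simp
    calc (G.dist u v : ℝ) ≤ ((max m 1 : ℕ) : ℝ) := by exact_mod_cast hdist_le
      _ ≤ L / s + 2 := key
      _ = Real.sqrt 5 * L / r + 2 := by rw [hLs]
  · -- ℓ₁ vs ℓ₂
    have hnorm : ‖(u : EuclideanSpace ℝ (Fin 2)) - (v : EuclideanSpace ℝ (Fin 2))‖ =
        Real.sqrt (((u : EuclideanSpace ℝ (Fin 2)) 0 - (v : EuclideanSpace ℝ (Fin 2)) 0) ^ 2 +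
          ((u : EuclideanSpace ℝ (Fin 2)) 1 - (v : EuclideanSpace ℝ (Fin 2)) 1) ^ 2) := by
      rw [EuclideanSpace.norm_eq]
      simp [Fin.sum_univ_two, PiLp.sub_apply, sq_abs]
    set a : ℝ := (u : EuclideanSpace ℝ (Fin 2)) 0 - (v : EuclideanSpace ℝ (Fin 2)) 0
    set b : ℝ := (u : EuclideanSpace ℝ (Fin 2)) 1 - (v : EuclideanSpace ℝ (Fin 2)) 1
    have hL2 : L ≤ Real.sqrt 2 * Real.sqrt (a ^ 2 + b ^ 2) := by
      rw [← Real.sqrt_mul (by norm_num)]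
      rw [Real.le_sqrt hL0 (by positivity)]
      have := sq_nonneg (|a| - |b|)
      have ha2 := sq_abs a
      have hb2 := sq_abs b
      nlinarith
    have h10 : Real.sqrt 10 = Real.sqrt 5 * Real.sqrt 2 := by
      rw [← Real.sqrt_mul (by norm_num)]; norm_num
    have hmain : Real.sqrt 5 * L ≤ Real.sqrt 10 * ‖(u : EuclideanSpace ℝ (Fin 2)) -
        (v : EuclideanSpace ℝ (Fin 2))‖ := by
      rw [hnorm, h10, mul_assoc]
      exact mul_le_mul_of_nonneg_left hL2 hsqrt5.le
    gcongr
end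

section
/- Let n ≥ 2, r > 0, partition the square [0,√n)² into congruent square cells of side r/√5 (assume √5·√n/r is an integer), and let S > 0, τ ≥ 1. Let V be a finite set of node labels with two position maps x, x' : V → [0,√n)² (positions at times t and t+τ) satisfying ‖x(u) − x'(u)‖ ≤ τ·S for every u ∈ V, and suppose every cell contains at least one node under x and also under x'. Let d and d' denote the shortest-path distances of the geometric graphs on the positions x and x' respectively, with radius r. Then for all distinct u, v ∈ V: (‖x(u) − x(v)‖ − 2τS)/r ≤ d'(u,v) ≤ √10·(‖x(u) − x(v)‖ + 2τS)/r + 2. -/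
set_option maxHeartbeats 1000000

lemma dist_eq_two' (p q : EuclideanSpace ℝ (Fin 2)) :
    dist p q = Real.sqrt ((p 0 - q 0)^2 + (p 1 - q 1)^2) := by
  rw [EuclideanSpace.dist_eq, Fin.sum_univ_two]
  simp [Real.dist_eq, sq_abs]

lemma interval_unique {s : ℝ} (hs : 0 < s) {i i' : ℕ} {t : ℝ}
    (h : t ∈ Set.Ico ((i:ℝ) * s) (((i:ℝ)+1) * s))
    (h' : t ∈ Set.Ico ((i':ℝ) * s) (((i':ℝ)+1) * s)) : i = i' := by
  by_contra hne
  rcases Nat.lt_or_ge i i' with hlt | hge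
  · have : ((i:ℝ)+1) ≤ (i':ℝ) := by exact_mod_cast hlt
    have h2 := h.2; have h1 := h'.1
    nlinarith
  · have hlt : i' < i := lt_of_le_of_ne hge (Ne.symm hne)
    have : ((i':ℝ)+1) ≤ (i:ℝ) := by exact_mod_cast hlt
    have h2 := h'.2; have h1 := h.1
    nlinarith

lemma cell_unique {s : ℝ} (hs : 0 < s) {p : EuclideanSpace ℝ (Fin 2)} {i j i' j' : ℕ}
    (hp : p ∈ cell s i j) (hp' : p ∈ cell s i' j') : i = i' ∧ j = j' :=
  ⟨interval_unique hs hp.1 hp'.1, interval_unique hs hp.2 hp'.2⟩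

lemma exists_interval {s : ℝ} (hs : 0 < s) {k : ℕ} {t : ℝ} (ht : 0 ≤ t)
    (htk : t < (k:ℝ) * s) : ∃ i < k, t ∈ Set.Ico ((i:ℝ) * s) (((i:ℝ)+1) * s) := by
  have h0 : (0:ℤ) ≤ ⌊t / s⌋ := Int.floor_nonneg.mpr (div_nonneg ht hs.le)
  refine ⟨(⌊t / s⌋).toNat, ?_, ?_, ?_⟩
  · have h1 : t / s < (k:ℝ) := by rw [div_lt_iff₀ hs]; linarith
    have h2 : ⌊t / s⌋ < (k:ℤ) := Int.floor_lt.mpr (by exact_mod_cast h1)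
    omega
  · have : ((⌊t / s⌋).toNat : ℝ) = (⌊t / s⌋ : ℝ) := by exact_mod_cast Int.toNat_of_nonneg h0
    rw [this, ← le_div_iff₀ hs]
    exact Int.floor_le _
  · have : ((⌊t / s⌋).toNat : ℝ) = (⌊t / s⌋ : ℝ) := by exact_mod_cast Int.toNat_of_nonneg h0
    rw [this, ← div_lt_iff₀ hs]
    exact Int.lt_floor_add_one _

lemma exists_cell {s : ℝ} (hs : 0 < s) {n k : ℕ} (hk : (k:ℝ) * s = Real.sqrt n)
    {p : EuclideanSpace ℝ (Fin 2)} (hp : p ∈ netSquare n) :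
    ∃ i < k, ∃ j < k, p ∈ cell s i j := by
  obtain ⟨i, hik, hi⟩ := exists_interval hs hp.1.1 (by rw [hk]; exact hp.1.2)
  obtain ⟨j, hjk, hj⟩ := exists_interval hs hp.2.1 (by rw [hk]; exact hp.2.2)
  exact ⟨i, hik, j, hjk, hi, hj⟩

/-- Points in cells whose index distance sum is ≤ 1 are within `√5 · s`. -/
lemma dist_lt_of_cells {s : ℝ} (hs : 0 < s) {p q : EuclideanSpace ℝ (Fin 2)}
    {i₁ j₁ i₂ j₂ : ℕ} (hp : p ∈ cell s i₁ j₁) (hq : q ∈ cell s i₂ j₂)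
    (h : (i₁ - i₂) + (i₂ - i₁) + (j₁ - j₂) + (j₂ - j₁) ≤ 1) :
    dist p q < Real.sqrt 5 * s := by
  obtain ⟨di, hdi⟩ : ∃ d : ℝ, |(i₁:ℝ) - (i₂:ℝ)| = d := ⟨_, rfl⟩
  obtain ⟨dj, hdj⟩ : ∃ d : ℝ, |(j₁:ℝ) - (j₂:ℝ)| = d := ⟨_, rfl⟩
  have hdix : |p 0 - q 0| < (di + 1) * s := by
    have h1 := hp.1.1; have h2 := hp.1.2; have h3 := hq.1.1; have h4 := hq.1.2
    rw [abs_lt]; constructor <;> cases abs_cases ((i₁:ℝ) - (i₂:ℝ)) <;> nlinarith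
  have hdjx : |p 1 - q 1| < (dj + 1) * s := by
    have h1 := hp.2.1; have h2 := hp.2.2; have h3 := hq.2.1; have h4 := hq.2.2
    rw [abs_lt]; constructor <;> cases abs_cases ((j₁:ℝ) - (j₂:ℝ)) <;> nlinarith
  have hdi0 : 0 ≤ di := hdi ▸ abs_nonneg _
  have hdj0 : 0 ≤ dj := hdj ▸ abs_nonneg _
  have e1 : di = (((i₁ - i₂) + (i₂ - i₁) : ℕ) : ℝ) := by
    rcases Nat.le_total i₁ i₂ with h' | h'
    · rw [← hdi, abs_of_nonpos (sub_nonpos.mpr (by exact_mod_cast h'))]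
      push_cast [Nat.sub_eq_zero_of_le h', Nat.cast_sub h']; ring
    · rw [← hdi, abs_of_nonneg (sub_nonneg.mpr (by exact_mod_cast h'))]
      push_cast [Nat.sub_eq_zero_of_le h', Nat.cast_sub h']; ring
  have e2 : dj = (((j₁ - j₂) + (j₂ - j₁) : ℕ) : ℝ) := by
    rcases Nat.le_total j₁ j₂ with h' | h'
    · rw [← hdj, abs_of_nonpos (sub_nonpos.mpr (by exact_mod_cast h'))]
      push_cast [Nat.sub_eq_zero_of_le h', Nat.cast_sub h']; ring
    · rw [← hdj, abs_of_nonneg (sub_nonneg.mpr (by exact_mod_cast h'))]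
      push_cast [Nat.sub_eq_zero_of_le h', Nat.cast_sub h']; ring
  have hsum : di + dj ≤ 1 := by
    have h1 : ((i₁ - i₂) + (i₂ - i₁)) + ((j₁ - j₂) + (j₂ - j₁)) ≤ 1 := by omega
    rw [e1, e2]; exact_mod_cast h1
  have hA : (p 0 - q 0)^2 + (p 1 - q 1)^2 < 5 * s^2 := by
    have a1 : (p 0 - q 0)^2 < ((di+1)*s)^2 := by
      have := abs_nonneg (p 0 - q 0)
      nlinarith [sq_abs (p 0 - q 0)]
    have a2 : (p 1 - q 1)^2 < ((dj+1)*s)^2 := by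
      have := abs_nonneg (p 1 - q 1)
      nlinarith [sq_abs (p 1 - q 1)]
    have key : (di+1)^2 + (dj+1)^2 ≤ 5 := by nlinarith [mul_nonneg hdi0 hdj0]
    have e : ((di+1)*s)^2 + ((dj+1)*s)^2 ≤ 5 * s^2 := by nlinarith [sq_nonneg s]
    linarith
  calc dist p q = Real.sqrt ((p 0 - q 0)^2 + (p 1 - q 1)^2) := dist_eq_two' p q
    _ < Real.sqrt (5 * s^2) := Real.sqrt_lt_sqrt (by positivity) hA
    _ = Real.sqrt 5 * s := by
        rw [Real.sqrt_mul (by norm_num), Real.sqrt_sq hs.le]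

/-- Converse estimate: the cell-index distance is bounded by the Euclidean distance. -/
lemma cells_le_dist {s : ℝ} (hs : 0 < s) {p q : EuclideanSpace ℝ (Fin 2)}
    {i₁ j₁ i₂ j₂ : ℕ} (hp : p ∈ cell s i₁ j₁) (hq : q ∈ cell s i₂ j₂) :
    ((((i₁ - i₂) + (i₂ - i₁) + (j₁ - j₂) + (j₂ - j₁)) : ℕ) : ℝ) * s
      < Real.sqrt 2 * dist p q + 2 * s := by
  obtain ⟨di, hdi⟩ : ∃ d : ℝ, |(i₁:ℝ) - (i₂:ℝ)| = d := ⟨_, rfl⟩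
  obtain ⟨dj, hdj⟩ : ∃ d : ℝ, |(j₁:ℝ) - (j₂:ℝ)| = d := ⟨_, rfl⟩
  have e1 : di = (((i₁ - i₂) + (i₂ - i₁) : ℕ) : ℝ) := by
    rcases Nat.le_total i₁ i₂ with h' | h'
    · rw [← hdi, abs_of_nonpos (sub_nonpos.mpr (by exact_mod_cast h'))]
      push_cast [Nat.sub_eq_zero_of_le h', Nat.cast_sub h']; ring
    · rw [← hdi, abs_of_nonneg (sub_nonneg.mpr (by exact_mod_cast h'))]
      push_cast [Nat.sub_eq_zero_of_le h', Nat.cast_sub h']; ring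
  have e2 : dj = (((j₁ - j₂) + (j₂ - j₁) : ℕ) : ℝ) := by
    rcases Nat.le_total j₁ j₂ with h' | h'
    · rw [← hdj, abs_of_nonpos (sub_nonpos.mpr (by exact_mod_cast h'))]
      push_cast [Nat.sub_eq_zero_of_le h', Nat.cast_sub h']; ring
    · rw [← hdj, abs_of_nonneg (sub_nonneg.mpr (by exact_mod_cast h'))]
      push_cast [Nat.sub_eq_zero_of_le h', Nat.cast_sub h']; ring
  have hdix : di * s < |p 0 - q 0| + s := by
    have h1 := hp.1.1; have h2 := hp.1.2; have h3 := hq.1.1; have h4 := hq.1.2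
    cases abs_cases ((i₁:ℝ) - (i₂:ℝ)) <;> cases abs_cases (p 0 - q 0) <;> nlinarith
  have hdjx : dj * s < |p 1 - q 1| + s := by
    have h1 := hp.2.1; have h2 := hp.2.2; have h3 := hq.2.1; have h4 := hq.2.2
    cases abs_cases ((j₁:ℝ) - (j₂:ℝ)) <;> cases abs_cases (p 1 - q 1) <;> nlinarith
  have habs : |p 0 - q 0| + |p 1 - q 1| ≤ Real.sqrt 2 * dist p q := by
    rw [dist_eq_two', ← Real.sqrt_mul (by norm_num : (0:ℝ) ≤ 2)]
    rw [show (|p 0 - q 0| + |p 1 - q 1|) = Real.sqrt ((|p 0 - q 0| + |p 1 - q 1|)^2) from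
      (Real.sqrt_sq (by positivity)).symm]
    apply Real.sqrt_le_sqrt
    nlinarith [sq_abs (p 0 - q 0), sq_abs (p 1 - q 1), abs_nonneg (p 0 - q 0),
      abs_nonneg (p 1 - q 1), sq_nonneg (|p 0 - q 0| - |p 1 - q 1|)]
  have ecast : ((((i₁ - i₂) + (i₂ - i₁) + (j₁ - j₂) + (j₂ - j₁)) : ℕ) : ℝ) = di + dj := by
    rw [e1, e2]; push_cast; ring
  rw [ecast]
  nlinarith

/-- Build a walk in the geometric graph from `a` to `v`, stepping through adjacent
populated cells. -/
lemma walk_to_target {V : Type*} (x' : V → EuclideanSpace ℝ (Fin 2)) (r s : ℝ)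
    (hs : 0 < s) (hrs : Real.sqrt 5 * s = r) (k : ℕ)
    (hfull' : ∀ i < k, ∀ j < k, ∃ u, x' u ∈ cell s i j)
    (v : V) (i₂ j₂ : ℕ) (hi₂ : i₂ < k) (hj₂ : j₂ < k) (hv : x' v ∈ cell s i₂ j₂) :
    ∀ m : ℕ, ∀ a i₁ j₁, i₁ < k → j₁ < k → x' a ∈ cell s i₁ j₁ →
      (i₁ - i₂) + (i₂ - i₁) + (j₁ - j₂) + (j₂ - j₁) = m →
      a = v ∨ ∃ w : (geomGraph x' r).Walk a v, w.length ≤ max m 1 := by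
  intro m
  induction m with
  | zero =>
    intro a i₁ j₁ _ _ ha hm
    by_cases hav : a = v
    · exact Or.inl hav
    · right
      have hadj : (geomGraph x' r).Adj a v :=
        ⟨hav, hrs ▸ dist_lt_of_cells hs ha hv (by omega)⟩
      exact ⟨hadj.toWalk, by simp⟩
  | succ m ih =>
    intro a i₁ j₁ hi₁ hj₁ ha hm
    right
    rcases Nat.eq_zero_or_pos m with rfl | hmpos
    · -- a's cell is adjacent to v's cell: direct edge
      have hav : a ≠ v := by
        intro h; subst h
        obtain ⟨e1, e2⟩ := cell_unique hs ha hv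
        omega
      have hadj : (geomGraph x' r).Adj a v :=
        ⟨hav, hrs ▸ dist_lt_of_cells hs ha hv (by omega)⟩
      exact ⟨hadj.toWalk, by simp⟩
    · -- step to an adjacent cell closer to the target
      have hstep : ∃ i₁' j₁', i₁' < k ∧ j₁' < k ∧
          ((i₁ - i₁') + (i₁' - i₁) + (j₁ - j₁') + (j₁' - j₁) = 1) ∧
          ((i₁' - i₂) + (i₂ - i₁') + (j₁' - j₂) + (j₂ - j₁') = m) := by
        by_cases h1 : i₁ < i₂
        · exact ⟨i₁ + 1, j₁, by omega, hj₁, by omega, by omega⟩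
        by_cases h2 : i₂ < i₁
        · exact ⟨i₁ - 1, j₁, by omega, hj₁, by omega, by omega⟩
        by_cases h3 : j₁ < j₂
        · exact ⟨i₁, j₁ + 1, hi₁, by omega, by omega, by omega⟩
        · exact ⟨i₁, j₁ - 1, hi₁, by omega, by omega, by omega⟩
      obtain ⟨i₁', j₁', hik, hjk, hstep1, hrem⟩ := hstep
      obtain ⟨c, hc⟩ := hfull' i₁' hik j₁' hjk
      have hac : a ≠ c := by
        intro h; subst h
        obtain ⟨e1, e2⟩ := cell_unique hs ha hc
        omega
      have hadj : (geomGraph x' r).Adj a c :=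
        ⟨hac, hrs ▸ dist_lt_of_cells hs ha hc (by omega)⟩
      rcases ih c i₁' j₁' hik hjk hc hrem with rfl | ⟨w, hw⟩
      · exact ⟨hadj.toWalk, by simp⟩
      · refine ⟨SimpleGraph.Walk.cons hadj w, ?_⟩
        rw [SimpleGraph.Walk.length_cons]
        omega

/-- Along any walk in the geometric graph, the Euclidean displacement is at most
`length · r`. -/
lemma dist_le_walk_length {V : Type*} (x' : V → EuclideanSpace ℝ (Fin 2)) {r : ℝ}
    (hr : 0 ≤ r) {a b : V} (w : (geomGraph x' r).Walk a b) :
    dist (x' a) (x' b) ≤ (w.length : ℝ) * r := by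
  induction w with
  | nil => simp
  | @cons a c b h p ih =>
    have h2 : dist (x' a) (x' c) < r := h.2
    calc dist (x' a) (x' b) ≤ dist (x' a) (x' c) + dist (x' c) (x' b) := dist_triangle _ _ _
      _ ≤ r + (p.length : ℝ) * r := by linarith
      _ = (((SimpleGraph.Walk.cons h p).length : ℕ) : ℝ) * r := by
          rw [SimpleGraph.Walk.length_cons]; push_cast; ring

/-- Smoothness of the connectivity graph under speed-limited mobility: if each node moves
Euclidean distance at most `τ·S` between the configurations `x` and `x'`, and all cells of
side `r/√5` are populated in both configurations, then the hop distance `d'` at the later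
time satisfies `(‖x(u)−x(v)‖ − 2τS)/r ≤ d'(u,v) ≤ √10·(‖x(u)−x(v)‖ + 2τS)/r + 2`. -/
theorem hopDist_smooth (n : ℕ) (hn : 2 ≤ n) (r : ℝ) (hr : 0 < r)
    (k : ℕ) (hk : (k : ℝ) * (r / Real.sqrt 5) = Real.sqrt n)
    (S τ : ℝ) (hS : 0 < S) (hτ : 1 ≤ τ)
    (V : Type*) [Fintype V] (x x' : V → EuclideanSpace ℝ (Fin 2))
    (hx : ∀ u, x u ∈ netSquare n) (hx' : ∀ u, x' u ∈ netSquare n)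
    (hspeed : ∀ u, ‖x u - x' u‖ ≤ τ * S)
    (hfull : ∀ i < k, ∀ j < k, ∃ u, x u ∈ cell (r / Real.sqrt 5) i j)
    (hfull' : ∀ i < k, ∀ j < k, ∃ u, x' u ∈ cell (r / Real.sqrt 5) i j)
    (u v : V) (huv : u ≠ v) :
    (‖x u - x v‖ - 2 * τ * S) / r ≤ ((geomGraph x' r).dist u v : ℝ) ∧
      ((geomGraph x' r).dist u v : ℝ) ≤
        Real.sqrt 10 * (‖x u - x v‖ + 2 * τ * S) / r + 2 := by
  have h5 : (0:ℝ) < Real.sqrt 5 := Real.sqrt_pos.mpr (by norm_num)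
  set s : ℝ := r / Real.sqrt 5 with hs_def
  have hs : 0 < s := div_pos hr h5
  have hrs : Real.sqrt 5 * s = r := by
    rw [hs_def, mul_div_cancel₀ _ (ne_of_gt h5)]
  have hτS : 0 < τ * S := mul_pos (lt_of_lt_of_le one_pos hτ) hS
  -- cells of u and v
  obtain ⟨i₁, hi₁, j₁, hj₁, hu⟩ := exists_cell hs hk (hx' u)
  obtain ⟨i₂, hi₂, j₂, hj₂, hv⟩ := exists_cell hs hk (hx' v)
  -- the walk
  rcases walk_to_target x' r s hs hrs k hfull' v i₂ j₂ hi₂ hj₂ hv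
      ((i₁ - i₂) + (i₂ - i₁) + (j₁ - j₂) + (j₂ - j₁)) u i₁ j₁ hi₁ hj₁ hu rfl with
    rfl | ⟨w, hw⟩
  · exact absurd rfl huv
  set m : ℕ := (i₁ - i₂) + (i₂ - i₁) + (j₁ - j₂) + (j₂ - j₁) with hm_def
  have hreach : (geomGraph x' r).Reachable u v := ⟨w⟩
  have hdist_le : (geomGraph x' r).dist u v ≤ max m 1 :=
    le_trans (SimpleGraph.dist_le w) hw
  -- norm relations
  have key : ∀ a b : EuclideanSpace ℝ (Fin 2), ∀ a' b' : EuclideanSpace ℝ (Fin 2),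
      ‖a - a'‖ ≤ τ * S → ‖b - b'‖ ≤ τ * S → ‖a' - b'‖ ≤ ‖a - b‖ + 2 * τ * S := by
    intro a b a' b' ha hb
    have e : a' - b' = (a - b) - (a - a') + (b - b') := by abel
    calc ‖a' - b'‖ = ‖(a - b) - (a - a') + (b - b')‖ := by rw [e]
      _ ≤ ‖(a - b) - (a - a')‖ + ‖b - b'‖ := norm_add_le _ _
      _ ≤ ‖a - b‖ + ‖a - a'‖ + ‖b - b'‖ := by linarith [norm_sub_le (a - b) (a - a')]
      _ ≤ ‖a - b‖ + 2 * τ * S := by linarith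
  have hnorm' : ‖x' u - x' v‖ ≤ ‖x u - x v‖ + 2 * τ * S :=
    key (x u) (x v) (x' u) (x' v) (hspeed u) (hspeed v)
  have hnorm : ‖x u - x v‖ ≤ ‖x' u - x' v‖ + 2 * τ * S := by
    have hu' : ‖x' u - x u‖ ≤ τ * S := by rw [norm_sub_rev]; exact hspeed u
    have hv' : ‖x' v - x v‖ ≤ τ * S := by rw [norm_sub_rev]; exact hspeed v
    exact key (x' u) (x' v) (x u) (x v) hu' hv'
  constructor
  · -- lower bound
    obtain ⟨p, hp⟩ := hreach.exists_walk_length_eq_dist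
    have hle : dist (x' u) (x' v) ≤ (p.length : ℝ) * r := dist_le_walk_length x' hr.le p
    rw [hp] at hle
    rw [dist_eq_norm] at hle
    rw [div_le_iff₀ hr]
    linarith
  · -- upper bound
    have hQ : 0 ≤ Real.sqrt 10 * (‖x u - x v‖ + 2 * τ * S) / r :=
      div_nonneg (mul_nonneg (Real.sqrt_nonneg _)
        (by positivity)) hr.le
    have hcast : ((geomGraph x' r).dist u v : ℝ) ≤ (max m 1 : ℕ) := by exact_mod_cast hdist_le
    rcases Nat.eq_zero_or_pos m with hm0 | hmpos
    · -- same cell: hop distance ≤ 1 ≤ 2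
      have : ((max m 1 : ℕ) : ℝ) = 1 := by rw [hm0]; norm_num
      rw [this] at hcast
      linarith
    · have hmax : (max m 1) = m := Nat.max_eq_left hmpos
      rw [hmax] at hcast
      -- geometric estimate
      have hgeo := cells_le_dist hs hu hv
      rw [← hm_def, dist_eq_norm] at hgeo
      -- √10 = √2 * √5
      have h10 : Real.sqrt 10 = Real.sqrt 2 * Real.sqrt 5 := by
        rw [← Real.sqrt_mul (by norm_num : (0:ℝ) ≤ 2)]; norm_num
      have h2nn : (0:ℝ) ≤ Real.sqrt 2 := Real.sqrt_nonneg _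
      -- m * s < √2 * ‖x' u - x' v‖ + 2s ≤ √2 (‖x u - x v‖ + 2τS) + 2s
      have step1 : (m : ℝ) * s ≤ Real.sqrt 2 * (‖x u - x v‖ + 2 * τ * S) + 2 * s := by
        nlinarith
      -- divide by s; note √2 / s = √10 / r
      have hsr : Real.sqrt 2 / s = Real.sqrt 10 / r := by
        rw [h10, ← hrs]
        field_simp
      have step2 : (m : ℝ) ≤ Real.sqrt 10 * (‖x u - x v‖ + 2 * τ * S) / r + 2 := by
        have h1 : (m : ℝ) ≤ (Real.sqrt 2 * (‖x u - x v‖ + 2 * τ * S) + 2 * s) / s := by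
          rw [le_div_iff₀ hs]; linarith
        have h2 : (Real.sqrt 2 * (‖x u - x v‖ + 2 * τ * S) + 2 * s) / s
            = (Real.sqrt 2 / s) * (‖x u - x v‖ + 2 * τ * S) + 2 := by
          field_simp
        rw [h2, hsr] at h1
        calc (m : ℝ) ≤ (Real.sqrt 10 / r) * (‖x u - x v‖ + 2 * τ * S) + 2 := h1
          _ = Real.sqrt 10 * (‖x u - x v‖ + 2 * τ * S) / r + 2 := by ring
      calc ((geomGraph x' r).dist u v : ℝ) ≤ (m : ℝ) := hcast
        _ ≤ _ := step2
end

section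
/- Let β > 2, N₀ > 0, ς > 0 and c = √5. There exists a constant δ > 0 (depending only on β, N₀, ς) such that for every r ≥ 1 the following holds. Set s = r/c and P = (N₀·ς·r)^β. Let the receiver be at Euclidean distance at most 2s from the transmitter, and let {w₁, w₂, …} be any (finite or countable) set of interferer positions in ℝ² such that for every integer i ≥ 1 at most 8i interferers are at Euclidean distance less than 2s(2i+1) from the receiver, and no interferer is at distance less than 2s from the receiver. Then the total interference I = ∑ⱼ P·‖wⱼ − receiver‖^{−β} satisfies I ≤ P·(2s)^{−β}·∑_{i=1}^{∞} 8i·(2i−1)^{−β} < ∞, the received signal strength satisfies S ≥ P·min{1, (2s)^{−β}}, and the signal-to-interference-plus-noise ratio satisfies S/(N₀ + I) ≥ δ, a bound independent of r. -/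
open Metric

private lemma sinr_aux_series_summable {β : ℝ} (hβ : 2 < β) :
    Summable (fun i : ℕ => 8 * ((i : ℝ) + 1) * (2 * ((i : ℝ) + 1) - 1) ^ (-β)) := by
  have hsum : Summable (fun n : ℕ => (n : ℝ) ^ (1 - β)) :=
    Real.summable_nat_rpow.2 (by linarith)
  have hsum1 : Summable (fun n : ℕ => ((n + 1 : ℕ) : ℝ) ^ (1 - β)) :=
    (summable_nat_add_iff 1).2 hsum
  have hsum2 : Summable (fun n : ℕ => 8 * ((n : ℝ) + 1) ^ (1 - β)) := by
    have : (fun n : ℕ => ((n + 1 : ℕ) : ℝ) ^ (1 - β)) =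
        (fun n : ℕ => ((n : ℝ) + 1) ^ (1 - β)) := by
      funext n; push_cast; ring_nf
    exact (this ▸ hsum1).mul_left 8
  apply Summable.of_nonneg_of_le _ _ hsum2
  · intro i
    have hi0 : (0:ℝ) ≤ (i : ℝ) := Nat.cast_nonneg i
    have h1 : (0:ℝ) ≤ 2 * ((i : ℝ) + 1) - 1 := by linarith
    have h2 : (0:ℝ) ≤ 8 * ((i : ℝ) + 1) := by linarith
    exact mul_nonneg h2 (Real.rpow_nonneg h1 _)
  · intro i
    have hi1 : (0:ℝ) < (i : ℝ) + 1 := by positivity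
    have hle : ((i : ℝ) + 1) ≤ 2 * ((i : ℝ) + 1) - 1 := by
      have hi0 : (0:ℝ) ≤ (i : ℝ) := Nat.cast_nonneg i
      linarith
    have h3 : (2 * ((i : ℝ) + 1) - 1) ^ (-β) ≤ ((i : ℝ) + 1) ^ (-β) :=
      Real.rpow_le_rpow_of_nonpos hi1 hle (by linarith)
    calc 8 * ((i : ℝ) + 1) * (2 * ((i : ℝ) + 1) - 1) ^ (-β)
        ≤ 8 * ((i : ℝ) + 1) * ((i : ℝ) + 1) ^ (-β) := by
          apply mul_le_mul_of_nonneg_left h3 (by positivity)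
      _ = 8 * ((i : ℝ) + 1) ^ (1 - β) := by
          rw [show (1 : ℝ) - β = 1 + (-β) by ring, Real.rpow_add hi1,
            Real.rpow_one]; ring

private lemma sinr_aux_group (β : ℝ) : ∀ m : ℕ,
    ∑ j ∈ Finset.range (8 * m), (2 * ((j / 8 : ℕ) : ℝ) + 1) ^ (-β)
      = ∑ i ∈ Finset.range m, 8 * (2 * (i : ℝ) + 1) ^ (-β) := by
  intro m
  induction m with
  | zero => simp
  | succ m ih =>
    have h8 : 8 * (m + 1) = 8 * m + 1 + 1 + 1 + 1 + 1 + 1 + 1 + 1 := by ring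
    rw [h8]
    rw [Finset.sum_range_succ, Finset.sum_range_succ, Finset.sum_range_succ,
      Finset.sum_range_succ, Finset.sum_range_succ, Finset.sum_range_succ,
      Finset.sum_range_succ, Finset.sum_range_succ, ih, Finset.sum_range_succ]
    have e0 : (8 * m) / 8 = m := by omega
    have e1 : (8 * m + 1) / 8 = m := by omega
    have e2 : (8 * m + 1 + 1) / 8 = m := by omega
    have e3 : (8 * m + 1 + 1 + 1) / 8 = m := by omega
    have e4 : (8 * m + 1 + 1 + 1 + 1) / 8 = m := by omega
    have e5 : (8 * m + 1 + 1 + 1 + 1 + 1) / 8 = m := by omega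
    have e6 : (8 * m + 1 + 1 + 1 + 1 + 1 + 1) / 8 = m := by omega
    have e7 : (8 * m + 1 + 1 + 1 + 1 + 1 + 1 + 1) / 8 = m := by omega
    rw [e0, e1, e2, e3, e4, e5, e6, e7]
    ring

private lemma sinr_aux_count {β s2 : ℝ} (hβ : 2 < β) (hs2 : 0 < s2)
    {y : EuclideanSpace ℝ (Fin 2)} {W : Set (EuclideanSpace ℝ (Fin 2))}
    (hfar : ∀ w ∈ W, s2 ≤ dist w y)
    (hball : ∀ i : ℕ, 1 ≤ i →
      (W ∩ ball y (s2 * (2 * (i : ℝ) + 1))).encard ≤ (8 * i : ℕ)) :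
    ∀ n : ℕ, ∀ F : Finset ↥W, F.card = n →
      ∑ w ∈ F, dist (w : EuclideanSpace ℝ (Fin 2)) y ^ (-β) ≤
        s2 ^ (-β) * ∑ j ∈ Finset.range n, (2 * ((j / 8 : ℕ) : ℝ) + 1) ^ (-β) := by
  intro n
  induction n with
  | zero =>
    intro F hF
    rw [Finset.card_eq_zero.1 hF]
    simp
  | succ n ih =>
    intro F hF
    have hne : F.Nonempty := Finset.card_pos.1 (by omega)
    obtain ⟨a, haF, hamax⟩ := F.exists_max_image
      (fun w => dist (w : EuclideanSpace ℝ (Fin 2)) y) hne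
    classical
    have hcard' : (F.erase a).card = n := by
      rw [Finset.card_erase_of_mem haF, hF]; omega
    have hsplit := Finset.add_sum_erase F
      (fun w => dist (w : EuclideanSpace ℝ (Fin 2)) y ^ (-β)) haF
    -- key distance bound for the farthest point
    have hkey : s2 * (2 * ((n / 8 : ℕ) : ℝ) + 1) ≤
        dist (a : EuclideanSpace ℝ (Fin 2)) y := by
      rcases Nat.eq_zero_or_pos (n / 8) with h0 | hpos
      · rw [h0]
        simpa using hfar _ a.2
      · by_contra hlt
        push_neg at hlt
        have hsub : (↑(F.image (Subtype.val : ↥W → EuclideanSpace ℝ (Fin 2))) :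
            Set (EuclideanSpace ℝ (Fin 2))) ⊆
            W ∩ ball y (s2 * (2 * ((n / 8 : ℕ) : ℝ) + 1)) := by
          intro x hx
          simp only [Finset.coe_image, Set.mem_image, Finset.mem_coe] at hx
          obtain ⟨w, hwF, rfl⟩ := hx
          refine ⟨w.2, ?_⟩
          have := hamax w hwF
          exact mem_ball.2 (lt_of_le_of_lt this hlt)
        have h1 : ((F.card : ℕ∞)) ≤
            (W ∩ ball y (s2 * (2 * ((n / 8 : ℕ) : ℝ) + 1))).encard := by
          have := Set.encard_mono hsub
          rwa [Set.encard_coe_eq_coe_finsetCard,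
            Finset.card_image_of_injective F Subtype.val_injective] at this
        have h2 := hball (n / 8) hpos
        have h3 : (F.card : ℕ∞) ≤ ((8 * (n / 8) : ℕ) : ℕ∞) := h1.trans h2
        have h4 : F.card ≤ 8 * (n / 8) := by exact_mod_cast h3
        omega
    have hdista : (0:ℝ) < s2 * (2 * ((n / 8 : ℕ) : ℝ) + 1) := by positivity
    have hterm : dist (a : EuclideanSpace ℝ (Fin 2)) y ^ (-β) ≤
        s2 ^ (-β) * (2 * ((n / 8 : ℕ) : ℝ) + 1) ^ (-β) := by
      rw [← Real.mul_rpow hs2.le (by positivity)]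
      exact Real.rpow_le_rpow_of_nonpos hdista hkey (by linarith)
    have hih := ih (F.erase a) hcard'
    rw [← hsplit, Finset.sum_range_succ, mul_add]
    linarith

/-- **SINR lower bound for the TDMA scheme.** With path-loss exponent `β > 2`, power
`P = (N₀ ς r)^β`, squares of side `s = r/√5`, a receiver within `2s` of its transmitter,
and interferers spread so that at most `8i` of them lie within distance `2s(2i+1)` of the
receiver (and none closer than `2s`), the interference sum converges, is at most
`P (2s)^(−β) ∑ᵢ 8i (2i−1)^(−β)`, the signal strength is at least `P·min{1,(2s)^(−β)}`,
and the SINR is bounded below by a constant `δ > 0` independent of `r`. -/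
theorem sinr_lower_bound (β N₀ ς : ℝ) (hβ : 2 < β) (hN₀ : 0 < N₀) (hς : 0 < ς) :
    ∃ δ : ℝ, 0 < δ ∧
    ∀ r : ℝ, 1 ≤ r →
    ∀ (y z : EuclideanSpace ℝ (Fin 2)), z ≠ y →
      dist z y ≤ 2 * (r / Real.sqrt 5) →
    ∀ W : Set (EuclideanSpace ℝ (Fin 2)), W.Countable →
      (∀ w ∈ W, 2 * (r / Real.sqrt 5) ≤ dist w y) →
      (∀ i : ℕ, 1 ≤ i →
        (W ∩ ball y (2 * (r / Real.sqrt 5) * (2 * (i : ℝ) + 1))).encard ≤ (8 * i : ℕ)) →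
      Summable (fun w : ↥W =>
          (N₀ * ς * r) ^ β * dist (w : EuclideanSpace ℝ (Fin 2)) y ^ (-β)) ∧
      Summable (fun i : ℕ =>
          8 * ((i : ℝ) + 1) * (2 * ((i : ℝ) + 1) - 1) ^ (-β)) ∧
      (∑' w : ↥W, (N₀ * ς * r) ^ β * dist (w : EuclideanSpace ℝ (Fin 2)) y ^ (-β)) ≤
        (N₀ * ς * r) ^ β * (2 * (r / Real.sqrt 5)) ^ (-β) *
          ∑' i : ℕ, 8 * ((i : ℝ) + 1) * (2 * ((i : ℝ) + 1) - 1) ^ (-β) ∧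
      (N₀ * ς * r) ^ β * min 1 ((2 * (r / Real.sqrt 5)) ^ (-β)) ≤
        (N₀ * ς * r) ^ β * dist z y ^ (-β) ∧
      δ ≤ ((N₀ * ς * r) ^ β * dist z y ^ (-β)) /
            (N₀ + ∑' w : ↥W,
              (N₀ * ς * r) ^ β * dist (w : EuclideanSpace ℝ (Fin 2)) y ^ (-β)) := by
  have hC : Summable (fun i : ℕ => 8 * ((i : ℝ) + 1) * (2 * ((i : ℝ) + 1) - 1) ^ (-β)) :=
    sinr_aux_series_summable hβ
  set C : ℝ := ∑' i : ℕ, 8 * ((i : ℝ) + 1) * (2 * ((i : ℝ) + 1) - 1) ^ (-β) with hCdef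
  have hC0 : 0 ≤ C := by
    apply tsum_nonneg
    intro i
    have hi0 : (0:ℝ) ≤ (i : ℝ) := Nat.cast_nonneg i
    have h1 : (0:ℝ) ≤ 2 * ((i : ℝ) + 1) - 1 := by linarith
    positivity
  have hK : (0:ℝ) < (N₀ * ς * Real.sqrt 5 / 2) ^ β := by
    apply Real.rpow_pos_of_pos
    have : (0:ℝ) < Real.sqrt 5 := Real.sqrt_pos.2 (by norm_num)
    positivity
  set K : ℝ := (N₀ * ς * Real.sqrt 5 / 2) ^ β with hKdef
  have hA : (0:ℝ) < min ((N₀ * ς) ^ β) K :=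
    lt_min (Real.rpow_pos_of_pos (by positivity) _) hK
  refine ⟨min ((N₀ * ς) ^ β) K / (N₀ + K * C), by positivity, ?_⟩
  intro r hr y z hzy hzdist W hWc hfar hball
  have hr0 : (0:ℝ) < r := by linarith
  have hsqrt5 : (0:ℝ) < Real.sqrt 5 := Real.sqrt_pos.2 (by norm_num)
  set s2 : ℝ := 2 * (r / Real.sqrt 5) with hs2def
  have hs2 : (0:ℝ) < s2 := by positivity
  set P : ℝ := (N₀ * ς * r) ^ β with hPdef
  have hP : (0:ℝ) < P := Real.rpow_pos_of_pos (by positivity) _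
  -- P * s2^(-β) = K
  have hPK : P * s2 ^ (-β) = K := by
    have h1 : s2 ^ (-β) = (s2 ^ β)⁻¹ := Real.rpow_neg hs2.le β
    rw [hPdef, hKdef, hs2def, h1, ← div_eq_mul_inv,
      ← Real.div_rpow (by positivity) (by positivity)]
    congr 1
    rw [div_eq_div_iff (by positivity) (by norm_num)]
    have h2 : Real.sqrt 5 * (r / Real.sqrt 5) = r := by
      rw [mul_div_assoc', mul_comm, mul_div_assoc, div_self hsqrt5.ne', mul_one]
    calc N₀ * ς * r * 2 = N₀ * ς * (Real.sqrt 5 * (r / Real.sqrt 5)) * 2 := by rw [h2]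
      _ = N₀ * ς * Real.sqrt 5 * (2 * (r / Real.sqrt 5)) := by ring
  -- Finset bound
  have hfinset : ∀ F : Finset ↥W,
      ∑ w ∈ F, P * dist (w : EuclideanSpace ℝ (Fin 2)) y ^ (-β) ≤ P * s2 ^ (-β) * C := by
    intro F
    rw [← Finset.mul_sum]
    have h1 := sinr_aux_count hβ hs2 hfar hball F.card F rfl
    have h2 : ∑ j ∈ Finset.range F.card, (2 * ((j / 8 : ℕ) : ℝ) + 1) ^ (-β) ≤
        ∑ j ∈ Finset.range (8 * F.card), (2 * ((j / 8 : ℕ) : ℝ) + 1) ^ (-β) := by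
      apply Finset.sum_le_sum_of_subset_of_nonneg
      · exact Finset.range_subset_range.2 (by omega)
      · intro j _ _
        positivity
    rw [sinr_aux_group β F.card] at h2
    have h3 : ∑ i ∈ Finset.range F.card, 8 * (2 * (i : ℝ) + 1) ^ (-β) ≤
        ∑ i ∈ Finset.range F.card, 8 * ((i : ℝ) + 1) * (2 * ((i : ℝ) + 1) - 1) ^ (-β) := by
      apply Finset.sum_le_sum
      intro i _
      have he : 2 * ((i : ℝ) + 1) - 1 = 2 * (i : ℝ) + 1 := by ring
      rw [he]
      have h4 : (0:ℝ) ≤ (2 * (i : ℝ) + 1) ^ (-β) := Real.rpow_nonneg (by positivity) _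
      have h5 : (8:ℝ) ≤ 8 * ((i : ℝ) + 1) := by
        have hi0 : (0:ℝ) ≤ (i : ℝ) := Nat.cast_nonneg i
        linarith
      exact mul_le_mul_of_nonneg_right h5 h4
    have h6 : ∑ i ∈ Finset.range F.card,
        8 * ((i : ℝ) + 1) * (2 * ((i : ℝ) + 1) - 1) ^ (-β) ≤ C := by
      apply Summable.sum_le_tsum _ _ hC
      intro i _
      have hi0 : (0:ℝ) ≤ (i : ℝ) := Nat.cast_nonneg i
      have h1 : (0:ℝ) ≤ 2 * ((i : ℝ) + 1) - 1 := by linarith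
      positivity
    have hchain : ∑ w ∈ F, dist (w : EuclideanSpace ℝ (Fin 2)) y ^ (-β) ≤
        s2 ^ (-β) * C := by
      calc ∑ w ∈ F, dist (w : EuclideanSpace ℝ (Fin 2)) y ^ (-β)
          ≤ s2 ^ (-β) * ∑ j ∈ Finset.range F.card, (2 * ((j / 8 : ℕ) : ℝ) + 1) ^ (-β) := h1
        _ ≤ s2 ^ (-β) * C := by
            apply mul_le_mul_of_nonneg_left _ (Real.rpow_nonneg hs2.le _)
            linarith
    calc P * ∑ w ∈ F, dist (w : EuclideanSpace ℝ (Fin 2)) y ^ (-β)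
        ≤ P * (s2 ^ (-β) * C) := mul_le_mul_of_nonneg_left hchain hP.le
      _ = P * s2 ^ (-β) * C := by ring
  have hnonneg : ∀ w : ↥W,
      0 ≤ P * dist (w : EuclideanSpace ℝ (Fin 2)) y ^ (-β) := by
    intro w
    have := Real.rpow_nonneg (dist_nonneg (x := (w : EuclideanSpace ℝ (Fin 2))) (y := y)) (-β)
    positivity
  have hsummable : Summable (fun w : ↥W =>
      P * dist (w : EuclideanSpace ℝ (Fin 2)) y ^ (-β)) :=
    summable_of_sum_le hnonneg hfinset
  have htsum_le : (∑' w : ↥W, P * dist (w : EuclideanSpace ℝ (Fin 2)) y ^ (-β)) ≤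
      P * s2 ^ (-β) * C := Summable.tsum_le_of_sum_le hsummable hfinset
  have hI0 : 0 ≤ ∑' w : ↥W, P * dist (w : EuclideanSpace ℝ (Fin 2)) y ^ (-β) :=
    tsum_nonneg hnonneg
  -- signal bound
  have hdz : (0:ℝ) < dist z y := dist_pos.2 hzy
  have hsig : P * min 1 (s2 ^ (-β)) ≤ P * dist z y ^ (-β) := by
    apply mul_le_mul_of_nonneg_left _ hP.le
    calc min 1 (s2 ^ (-β)) ≤ s2 ^ (-β) := min_le_right _ _
      _ ≤ dist z y ^ (-β) := Real.rpow_le_rpow_of_nonpos hdz hzdist (by linarith)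
  refine ⟨hsummable, hC, htsum_le, hsig, ?_⟩
  -- SINR bound
  set I : ℝ := ∑' w : ↥W, P * dist (w : EuclideanSpace ℝ (Fin 2)) y ^ (-β) with hIdef
  have hIK : I ≤ K * C := by
    rw [← hPK]; exact htsum_le
  have hSA : min ((N₀ * ς) ^ β) K ≤ P * dist z y ^ (-β) := by
    refine le_trans ?_ hsig
    have hminP : min ((N₀ * ς) ^ β) K ≤ min P K := by
      apply min_le_min _ le_rfl
      apply Real.rpow_le_rpow (by positivity) _ (by linarith)
      nlinarith [mul_pos hN₀ hς]
    calc min ((N₀ * ς) ^ β) K ≤ min P K := hminP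
      _ = P * min 1 (s2 ^ (-β)) := by
          rw [← hPK, mul_min_of_nonneg _ _ hP.le, mul_one]
  calc min ((N₀ * ς) ^ β) K / (N₀ + K * C)
      ≤ (P * dist z y ^ (-β)) / (N₀ + I) := by
        apply div_le_div₀ (by positivity) hSA (by positivity) (by linarith)
    _ = (P * dist z y ^ (-β)) / (N₀ + I) := rfl
end

section
/- There exist a countably infinite set S ⊆ ℝ² and a radius r > 0 such that the unit disk graph on S with radius r (edges between points at Euclidean distance less than r) is connected, and its shortest-path metric d_G is not doubling: for every constant α there exist u ∈ S and R > 0 such that the ball {v ∈ S : d_G(u,v) ≤ 2R} cannot be covered by α balls of radius R in the metric d_G. In fact, in the construction, for each radius R the ball of radius 2R around a suitable center requires at least ⌊R/4⌋ + 1 covering balls of radius R. -/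
noncomputable def pt (a b : ℤ) : EuclideanSpace ℝ (Fin 2) :=
  (WithLp.equiv 2 (Fin 2 → ℝ)).symm ![(a : ℝ), (b : ℝ)]

@[simp] lemma pt_zero (a b : ℤ) : pt a b 0 = (a : ℝ) := rfl
@[simp] lemma pt_one (a b : ℤ) : pt a b 1 = (b : ℝ) := rfl

lemma pt_inj {a b c d : ℤ} (h : pt a b = pt c d) : a = c ∧ b = d := by
  constructor
  · have := congrArg (fun p : EuclideanSpace ℝ (Fin 2) => p 0) h; rw [pt_zero, pt_zero] at this; exact Int.cast_inj.mp this
  · have := congrArg (fun p : EuclideanSpace ℝ (Fin 2) => p 1) h; rw [pt_one, pt_one] at this; exact Int.cast_inj.mp this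

lemma dist_pt (a b c d : ℤ) :
    dist (pt a b) (pt c d) = Real.sqrt ((((a-c : ℤ) : ℝ))^2 + (((b-d : ℤ) : ℝ))^2) := by
  rw [EuclideanSpace.dist_eq, Fin.sum_univ_two]
  simp [Real.dist_eq, sq_abs]

lemma sq_cases {x y : ℤ} (h : x^2 + y^2 = 1) :
    (x = 0 ∧ (y = 1 ∨ y = -1)) ∨ (y = 0 ∧ (x = 1 ∨ x = -1)) := by
  have hx1 : -1 ≤ x := by nlinarith [sq_nonneg y, sq_nonneg (x+1)]
  have hx2 : x ≤ 1 := by nlinarith [sq_nonneg y, sq_nonneg (x-1)]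
  have hy1 : -1 ≤ y := by nlinarith [sq_nonneg x, sq_nonneg (y+1)]
  have hy2 : y ≤ 1 := by nlinarith [sq_nonneg x, sq_nonneg (y-1)]
  interval_cases x <;> interval_cases y <;> norm_num at h <;> norm_num

lemma adj_iff (a b c d : ℤ) :
    (pt a b ≠ pt c d ∧ dist (pt a b) (pt c d) < 6/5) ↔ (a-c)^2 + (b-d)^2 = 1 := by
  rw [dist_pt]
  constructor
  · rintro ⟨hne, hlt⟩
    have h1 : ((a-c:ℤ):ℝ)^2 + ((b-d:ℤ):ℝ)^2 < (6/5)^2 :=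
      (Real.sqrt_lt' (by norm_num)).mp hlt
    have h2 : (((a-c)^2 + (b-d)^2 : ℤ) : ℝ) < 2 := by push_cast at h1 ⊢; nlinarith
    have h2' : (a-c)^2 + (b-d)^2 ≤ 1 := by exact_mod_cast Int.lt_add_one_iff.mp (by exact_mod_cast h2)
    have h3 : (a-c)^2 + (b-d)^2 ≠ 0 := by
      intro h0
      have ha : a - c = 0 := by nlinarith [sq_nonneg (a-c), sq_nonneg (b-d)]
      have hb : b - d = 0 := by nlinarith [sq_nonneg (a-c), sq_nonneg (b-d)]
      exact hne (by rw [show a = c by omega, show b = d by omega])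
    have := sq_nonneg (a-c); have := sq_nonneg (b-d); omega
  · intro h
    constructor
    · intro he
      obtain ⟨h1, h2⟩ := pt_inj he
      subst h1; subst h2; simp at h
    · have : (((a-c:ℤ)):ℝ)^2 + (((b-d:ℤ)):ℝ)^2 = 1 := by exact_mod_cast congrArg (fun n : ℤ => (n:ℝ)) h
      rw [this, Real.sqrt_one]; norm_num

def Scomb : Set (EuclideanSpace ℝ (Fin 2)) :=
  {p | ∃ a b : ℤ, 0 ≤ b ∧ (b = 0 ∨ Even a) ∧ p = pt a b}

noncomputable def P (a b : ℤ) (h0 : 0 ≤ b) (h1 : b = 0 ∨ Even a) : ↥Scomb :=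
  ⟨pt a b, a, b, h0, h1, rfl⟩

noncomputable abbrev G : SimpleGraph ↥Scomb :=
  geomGraph (fun p : ↥Scomb => (p : EuclideanSpace ℝ (Fin 2))) (6/5)

lemma adjP {a b c d : ℤ} (h0 : 0 ≤ b) (h1 : b = 0 ∨ Even a) (h0' : 0 ≤ d)
    (h1' : d = 0 ∨ Even c) (h : (a-c)^2 + (b-d)^2 = 1) :
    G.Adj (P a b h0 h1) (P c d h0' h1') := by
  obtain ⟨hne, hd⟩ := (adj_iff a b c d).mpr h
  exact And.intro (fun he => hne (congrArg Subtype.val he)) hd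

lemma adj_coords {u v : ↥Scomb} (h : G.Adj u v) {a b c d : ℤ}
    (hu : (u : EuclideanSpace ℝ (Fin 2)) = pt a b) (hv : (v : EuclideanSpace ℝ (Fin 2)) = pt c d) :
    (a-c)^2 + (b-d)^2 = 1 := by
  apply (adj_iff a b c d).mp
  refine ⟨?_, by rw [← hu, ← hv]; exact And.right h⟩
  intro he
  exact (And.left h) (Subtype.ext (by rw [hu, hv, he]))

/-- spine vertex -/
noncomputable def sp (i : ℤ) : ↥Scomb := P i 0 le_rfl (Or.inl rfl)

/-- tooth vertex -/
noncomputable def tp (a : ℤ) (ha : Even a) (j : ℕ) : ↥Scomb :=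
  P a j (by positivity) (Or.inr ha)

lemma tp_zero (a : ℤ) (ha : Even a) : tp a ha 0 = sp a := rfl

lemma adj_sp (i : ℤ) : G.Adj (sp i) (sp (i+1)) := adjP _ _ _ _ (by ring)

lemma adj_tp (a : ℤ) (ha : Even a) (j : ℕ) : G.Adj (tp a ha j) (tp a ha (j+1)) :=
  adjP _ _ _ _ (by push_cast; ring)

lemma reach_spine (i : ℤ) : G.Reachable (sp 0) (sp i) := by
  induction i using Int.induction_on with
  | zero => exact SimpleGraph.Reachable.refl _
  | succ n ih => exact ih.trans (adj_sp n).reachable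
  | pred n ih =>
      refine ih.trans ?_
      have := (adj_sp (-(n:ℤ) - 1)).symm.reachable
      simpa [sub_add_cancel] using this

lemma reach_tooth (a : ℤ) (ha : Even a) (j : ℕ) : G.Reachable (sp a) (tp a ha j) := by
  induction j with
  | zero => exact (tp_zero a ha) ▸ SimpleGraph.Reachable.refl _
  | succ n ih => exact ih.trans (adj_tp a ha n).reachable

lemma Gconn : G.Connected := by
  rw [SimpleGraph.connected_iff]
  refine ⟨fun u v => ?_, ⟨sp 0⟩⟩
  suffices h : ∀ w : ↥Scomb, G.Reachable (sp 0) w by exact (h u).symm.trans (h v)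
  rintro ⟨p, a, b, hb, hab, rfl⟩
  rcases eq_or_lt_of_le hb with hb0 | hbpos
  · have : (⟨pt a b, ⟨a, b, hb, hab, rfl⟩⟩ : ↥Scomb) = sp a := by
      apply Subtype.ext; simp [sp, P, ← hb0]
    rw [this]; exact reach_spine a
  · have ha : Even a := hab.resolve_left (by omega)
    have : (⟨pt a b, ⟨a, b, hb, hab, rfl⟩⟩ : ↥Scomb) = tp a ha b.toNat := by
      apply Subtype.ext
      simp [tp, P, Int.toNat_of_nonneg hb]
    rw [this]
    exact (reach_spine a).trans (reach_tooth a ha b.toNat)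

lemma adj_dist_le {u v : ↥Scomb} (h : G.Adj u v) : G.dist u v ≤ 1 :=
  SimpleGraph.dist_le (SimpleGraph.Walk.cons h SimpleGraph.Walk.nil)

lemma dist_spine (n : ℕ) : G.dist (sp 0) (sp n) ≤ n := by
  induction n with
  | zero => simp [SimpleGraph.dist_self]
  | succ m ih =>
      calc G.dist (sp 0) (sp (m+1)) ≤ G.dist (sp 0) (sp m) + G.dist (sp m) (sp (m+1)) :=
            Gconn.dist_triangle
        _ ≤ m + 1 := by
            have h2 : G.dist (sp (m:ℤ)) (sp ((m:ℤ)+1)) ≤ 1 := adj_dist_le (adj_sp m)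
            push_cast
            omega

lemma dist_tooth (a : ℤ) (ha : Even a) (j : ℕ) : G.dist (sp a) (tp a ha j) ≤ j := by
  induction j with
  | zero => simp [← tp_zero a ha, SimpleGraph.dist_self]
  | succ m ih =>
      calc G.dist (sp a) (tp a ha (m+1))
          ≤ G.dist (sp a) (tp a ha m) + G.dist (tp a ha m) (tp a ha (m+1)) :=
            Gconn.dist_triangle
        _ ≤ m + 1 := by
            have h2 := adj_dist_le (adj_tp a ha m)
            omega

lemma walk_lip {V : Type*} {H : SimpleGraph V} (g : V → ℤ)
    (hg : ∀ a b, H.Adj a b → |g a - g b| ≤ 1) {u v : V} (w : H.Walk u v) :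
    |g u - g v| ≤ (w.length : ℤ) := by
  induction w with
  | nil => simp
  | @cons u x v h p ih =>
      have h1 := hg _ _ h
      have h2 := abs_sub_le (g u) (g x) (g v)
      rw [SimpleGraph.Walk.length_cons]
      push_cast
      omega

lemma dist_lower (g : ↥Scomb → ℤ) (hg : ∀ a b, G.Adj a b → |g a - g b| ≤ 1)
    (u v : ↥Scomb) : g u - g v ≤ (G.dist u v : ℤ) := by
  obtain ⟨w, hw⟩ := (Gconn u v).exists_walk_length_eq_dist
  have := walk_lip g hg w
  rw [hw] at this
  have := le_abs_self (g u - g v)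
  omega

/-- potential function for teeth at columns `A` and `B` -/
noncomputable def gE (A B : ℤ) (p : EuclideanSpace ℝ (Fin 2)) : ℤ :=
  if p 0 = (A : ℝ) then ⌊p 1⌋ else if p 0 = (B : ℝ) then -⌊p 1⌋ else 0

lemma gE_pt (A B a b : ℤ) :
    gE A B (pt a b) = if a = A then b else if a = B then -b else 0 := by
  unfold gE
  rw [pt_zero, pt_one]
  simp [Int.cast_inj, Int.floor_intCast]

lemma glip (A B : ℤ) (hAB : A ≠ B) :
    ∀ u v : ↥Scomb, G.Adj u v → |gE A B (u : EuclideanSpace ℝ (Fin 2)) -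
      gE A B (v : EuclideanSpace ℝ (Fin 2))| ≤ 1 := by
  rintro ⟨up, a, b, hb, hab, rfl⟩ ⟨vp, c, d, hd, hcd, rfl⟩ h
  have h1 := adj_coords h rfl rfl
  rw [gE_pt, gE_pt]
  rcases sq_cases h1 with ⟨hac, hbd⟩ | ⟨hbd, hac⟩
  · have hac' : a = c := by omega
    subst hac'
    by_cases hA : a = A
    · simp only [if_pos hA]
      rw [abs_le]; omega
    · by_cases hB : a = B
      · simp only [if_neg hA, if_pos hB]
        rw [abs_le]; omega
      · simp [hA, hB]
  · have hbd' : b = d := by omega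
    by_cases hb0 : b = 0
    · subst hbd'; subst hb0
      split_ifs <;> norm_num
    · exfalso
      have hea : Even a := hab.resolve_left hb0
      have hec : Even c := hcd.resolve_left (by omega)
      obtain ⟨x, hx⟩ := hea
      obtain ⟨y, hy⟩ := hec
      omega

lemma even2 (k : ℕ) : Even (2*(k:ℤ)) := ⟨k, by ring⟩

noncomputable def vtx (N k : ℕ) : ↥Scomb := tp (2*(k:ℤ)) (even2 k) (N - 2*k)

lemma main_ball (R : ℝ) (hR : 0 < R) (s : Finset ↥Scomb)
    (hcov : {v : ↥Scomb | ((G.dist (sp 0) v : ℕ) : ℝ) ≤ 2*R} ⊆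
      ⋃ w ∈ s, {v : ↥Scomb | ((G.dist w v : ℕ) : ℝ) ≤ R}) :
    ⌊R/4⌋₊ + 1 ≤ s.card := by
  set F : ℕ := ⌊R/4⌋₊ with hF
  set m : ℕ := F + 1 with hm
  set N : ℕ := ⌊2*R⌋₊ with hN
  have hNle : (N : ℝ) ≤ 2*R := Nat.floor_le (by positivity)
  have hNgt : 2*R < (N : ℝ) + 1 := Nat.lt_floor_add_one _
  have hfl : (F : ℝ) ≤ R/4 := Nat.floor_le (by positivity)
  have h2k : ∀ k, k < m → 2*k ≤ N := by
    intro k hk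
    apply Nat.le_floor
    have hk' : (k : ℝ) ≤ F := by exact_mod_cast Nat.le_of_lt_succ hk
    push_cast
    linarith
  -- the selected vertices are in the ball of radius 2R around sp 0
  have hball : ∀ k, k < m → ((G.dist (sp 0) (vtx N k) : ℕ) : ℝ) ≤ 2*R := by
    intro k hk
    have hc : ((2*k : ℕ) : ℤ) = 2*(k:ℤ) := by push_cast; ring
    have h1 : G.dist (sp 0) (sp (2*(k:ℤ))) ≤ 2*k := by
      have := dist_spine (2*k); rwa [hc] at this
    have h2 : G.dist (sp (2*(k:ℤ))) (vtx N k) ≤ N - 2*k := dist_tooth _ (even2 k) _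
    have h3 : G.dist (sp 0) (vtx N k) ≤ N := by
      have := Gconn.dist_triangle (u := sp 0) (v := sp (2*(k:ℤ))) (w := vtx N k)
      have h4 := h2k k hk
      omega
    calc ((G.dist (sp 0) (vtx N k) : ℕ) : ℝ) ≤ (N : ℝ) := by exact_mod_cast h3
      _ ≤ 2*R := hNle
  -- pairwise separation
  have hsep : ∀ k k', k < m → k' < m → k ≠ k' → 2*R < ((G.dist (vtx N k) (vtx N k') : ℕ) : ℝ) := by
    intro k k' hk hk' hne
    have hAB : (2*(k:ℤ)) ≠ (2*(k':ℤ)) := by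
      intro h; apply hne; exact_mod_cast (by omega : (k:ℤ) = k')
    set g : ↥Scomb → ℤ := fun p => gE (2*(k:ℤ)) (2*(k':ℤ)) (p : EuclideanSpace ℝ (Fin 2))
    have hlow := dist_lower g (fun a b h => glip _ _ hAB a b h) (vtx N k) (vtx N k')
    have hgk : g (vtx N k) = ((N - 2*k : ℕ) : ℤ) := by
      show gE _ _ (pt (2*(k:ℤ)) ((N - 2*k : ℕ) : ℤ)) = _
      rw [gE_pt, if_pos rfl]
    have hgk' : g (vtx N k') = -((N - 2*k' : ℕ) : ℤ) := by
      show gE _ _ (pt (2*(k':ℤ)) ((N - 2*k' : ℕ) : ℤ)) = _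
      rw [gE_pt, if_neg (Ne.symm hAB), if_pos rfl]
    rw [hgk, hgk'] at hlow
    -- arithmetic
    have c1 : ((N - 2*k : ℕ) : ℤ) = (N:ℤ) - 2*k := by
      have := h2k k hk; omega
    have c2 : ((N - 2*k' : ℕ) : ℤ) = (N:ℤ) - 2*k' := by
      have := h2k k' hk'; omega
    have hsum : k + k' ≤ 2*F - 1 := by
      have : k ≤ F := Nat.le_of_lt_succ hk
      have : k' ≤ F := Nat.le_of_lt_succ hk'
      omega
    have hZ : 2*(N:ℤ) - 2*k - 2*k' ≤ (G.dist (vtx N k) (vtx N k') : ℤ) := by omega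
    have hRe : (2*(N:ℤ) - 2*k - 2*k' : ℤ) = 2*(N:ℝ) - 2*k - 2*k' := by push_cast; ring
    have hFz : 1 ≤ F := by
      rcases Nat.eq_zero_or_pos F with h0 | h1
      · omega
      · exact h1
    have hkk' : (k : ℝ) + k' ≤ 2*F - 1 := by
      have : ((k + k' : ℕ) : ℝ) ≤ ((2*F - 1 : ℕ) : ℝ) := by exact_mod_cast hsum
      push_cast [Nat.cast_sub (by omega : 1 ≤ 2*F)] at this
      linarith
    have final : 2*R < 2*(N:ℝ) - 2*k - 2*k' := by linarith
    calc (2*R : ℝ) < 2*(N:ℝ) - 2*k - 2*k' := final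
      _ ≤ ((G.dist (vtx N k) (vtx N k') : ℕ) : ℝ) := by exact_mod_cast hZ
  -- build the injection
  have key : ∀ k : ℕ, ∃ wk : ↥Scomb, k < m → wk ∈ s ∧ ((G.dist wk (vtx N k) : ℕ) : ℝ) ≤ R := by
    intro k
    by_cases hk : k < m
    · have hv := hcov (hball k hk)
      simp only [Set.mem_iUnion, Set.mem_setOf_eq, exists_prop] at hv
      obtain ⟨w, hws, hw⟩ := hv
      exact ⟨w, fun _ => ⟨hws, hw⟩⟩
    · exact ⟨sp 0, fun h => absurd h hk⟩
  choose w hw using key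
  have hcard : (Finset.range m).card ≤ s.card := by
    apply Finset.card_le_card_of_injOn w
    · intro k hk; exact (hw k (Finset.mem_range.mp hk)).1
    · intro k hk k' hk' he
      by_contra hne
      have hkm := Finset.mem_range.mp hk
      have hkm' := Finset.mem_range.mp hk'
      have h1 := (hw k hkm).2
      have h2 := (hw k' hkm').2
      rw [← he] at h2
      have htri : G.dist (vtx N k) (vtx N k') ≤
          G.dist (vtx N k) (w k) + G.dist (w k) (vtx N k') := Gconn.dist_triangle
      rw [SimpleGraph.dist_comm (u := vtx N k) (v := w k)] at htri
      have : ((G.dist (vtx N k) (vtx N k') : ℕ) : ℝ) ≤ 2*R := by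
        have := hsep k k' hkm hkm' hne
        push_cast at htri ⊢
        have htri' : ((G.dist (vtx N k) (vtx N k') : ℕ) : ℝ) ≤
            ((G.dist (w k) (vtx N k) : ℕ) : ℝ) + ((G.dist (w k) (vtx N k') : ℕ) : ℝ) := by
          exact_mod_cast htri
        linarith
      exact absurd this (not_le.mpr (hsep k k' hkm hkm' hne))
  simpa using hcard


/-- **Infinite unit disk graphs need not be doubling.** There is a countably infinite set
`S ⊆ ℝ²` and a radius `r > 0` whose unit disk graph is connected but whose hop metric is
not doubling: no constant `α` suffices to cover every ball of radius `2R` by `α` balls of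
radius `R`; in fact for every radius `R` some ball of radius `2R` needs at least
`⌊R/4⌋ + 1` covering balls of radius `R`. -/
theorem udg_not_doubling :
    ∃ (S : Set (EuclideanSpace ℝ (Fin 2))) (r : ℝ), 0 < r ∧ S.Countable ∧ S.Infinite ∧
      (geomGraph (fun p : ↥S => (p : EuclideanSpace ℝ (Fin 2))) r).Connected ∧
      (∀ α : ℕ, ∃ (u : ↥S) (R : ℝ), 0 < R ∧
        ¬ ∃ s : Finset ↥S, s.card ≤ α ∧
          {v : ↥S | ((geomGraph (fun p : ↥S => (p : EuclideanSpace ℝ (Fin 2))) r).dist u v : ℝ)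
              ≤ 2 * R} ⊆
            ⋃ w ∈ s, {v : ↥S |
              ((geomGraph (fun p : ↥S => (p : EuclideanSpace ℝ (Fin 2))) r).dist w v : ℝ)
                ≤ R}) ∧
      (∀ R : ℝ, 0 < R → ∃ u : ↥S, ∀ s : Finset ↥S,
        ({v : ↥S | ((geomGraph (fun p : ↥S => (p : EuclideanSpace ℝ (Fin 2))) r).dist u v : ℝ)
            ≤ 2 * R} ⊆
          ⋃ w ∈ s, {v : ↥S |
            ((geomGraph (fun p : ↥S => (p : EuclideanSpace ℝ (Fin 2))) r).dist w v : ℝ)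
              ≤ R}) →
        ⌊R / 4⌋₊ + 1 ≤ s.card) := by
  refine ⟨Scomb, 6/5, by norm_num, ?_, ?_, Gconn, ?_, ?_⟩
  · -- countable
    refine Set.Countable.mono ?_ (Set.countable_range (fun q : ℤ × ℤ => pt q.1 q.2))
    rintro p ⟨a, b, -, -, rfl⟩
    exact ⟨(a, b), rfl⟩
  · -- infinite
    apply Set.infinite_of_injective_forall_mem (f := fun n : ℕ => pt n 0)
    · intro n m h
      have := (pt_inj h).1
      exact_mod_cast this
    · intro n
      exact ⟨n, 0, le_rfl, Or.inl rfl, rfl⟩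
  · -- no doubling constant
    intro α
    refine ⟨sp 0, 4*α + 4, by positivity, ?_⟩
    rintro ⟨s, hcard, hcov⟩
    have h1 := main_ball (4*α + 4) (by positivity) s hcov
    have h2 : ⌊(4*(α:ℝ) + 4) / 4⌋₊ = α + 1 := by
      rw [show (4*(α:ℝ) + 4) / 4 = ((α + 1 : ℕ) : ℝ) by push_cast; ring, Nat.floor_natCast]
    rw [h2] at h1
    omega
  · -- quantitative bound
    intro R hR
    exact ⟨sp 0, fun s hcov => main_ball R hR s hcov⟩
end

section
/- For every integer β ≥ 1 there exist a finite set S ⊆ ℝ², a radius r > 0, a point u ∈ S and an integer R ≥ 1 such that in the geometric graph G(S,r), any family of balls of radius R (in the shortest-path metric d_G, centered at points of S) whose union contains the ball {v ∈ S : d_G(u,v) ≤ 2R} must have cardinality strictly greater than β. In particular, finite unit disk graphs can have arbitrarily large doubling constant. -/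
namespace UDGComb

noncomputable section

open SimpleGraph Finset

/-- The comb grid: spine `0 ≤ a ≤ 2β, b = 0`, and teeth at even columns `a = 2i`,
with heights `1 ≤ b ≤ 4β+2-a`. -/
def grid (β : ℕ) : Finset (ℤ × ℤ) :=
  (Finset.Icc (0:ℤ) (2*β) ×ˢ Finset.Icc (0:ℤ) (4*β+2)).filter
    (fun p => p.2 = 0 ∨ (p.1 % 2 = 0 ∧ p.2 ≤ 4*β+2 - p.1))

lemma mem_grid {β : ℕ} {p : ℤ × ℤ} :
    p ∈ grid β ↔ (0 ≤ p.1 ∧ p.1 ≤ 2*β ∧ 0 ≤ p.2 ∧ p.2 ≤ 4*β+2) ∧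
      (p.2 = 0 ∨ (p.1 % 2 = 0 ∧ p.2 ≤ 4*β+2 - p.1)) := by
  simp only [grid, Finset.mem_filter, Finset.mem_product, Finset.mem_Icc]
  tauto

/-- Embedding of the grid into the plane at spacing `0.8`. -/
def pt (a b : ℤ) : EuclideanSpace ℝ (Fin 2) :=
  (WithLp.equiv 2 (Fin 2 → ℝ)).symm ![0.8 * a, 0.8 * b]

lemma pt_apply0 (a b : ℤ) : pt a b 0 = 0.8 * a := rfl
lemma pt_apply1 (a b : ℤ) : pt a b 1 = 0.8 * b := rfl

lemma dist_pt (a b a' b' : ℤ) :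
    dist (pt a b) (pt a' b') < 1 ↔ (a-a')^2 + (b-b')^2 ≤ 1 := by
  rw [EuclideanSpace.dist_eq]
  have hs : ∑ i, dist (pt a b i) (pt a' b' i) ^ 2
      = (0.8*(a:ℝ) - 0.8*a')^2 + (0.8*(b:ℝ) - 0.8*b')^2 := by
    rw [Fin.sum_univ_two, pt_apply0, pt_apply1, pt_apply0, pt_apply1,
      Real.dist_eq, Real.dist_eq, sq_abs, sq_abs]
  rw [hs, Real.sqrt_lt' one_pos]
  constructor
  · intro h
    have h2 : ((a-a')^2 + (b-b')^2 : ℝ) < 25/16 := by push_cast; nlinarith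
    have h3 : ((a-a')^2 + (b-b')^2 : ℤ) < 2 := by
      have : (((a-a')^2 + (b-b')^2 : ℤ) : ℝ) < 2 := by push_cast at h2 ⊢; linarith
      exact_mod_cast this
    omega
  · intro h
    have h2 : (((a-a')^2 + (b-b')^2 : ℤ) : ℝ) ≤ 1 := by exact_mod_cast h
    push_cast at h2 ⊢
    nlinarith

lemma pt_inj {a b a' b' : ℤ} (h : pt a b = pt a' b') : a = a' ∧ b = b' := by
  have h' : ![(0.8:ℝ)*a, 0.8*b] = ![(0.8:ℝ)*a', 0.8*b'] := by
    have := congrArg (WithLp.equiv 2 (Fin 2 → ℝ)) h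
    simpa [pt] using this
  have h0 := congrFun h' 0
  have h1 := congrFun h' 1
  simp only [Matrix.cons_val_zero, Matrix.cons_val_one, Matrix.head_cons] at h0 h1
  constructor
  · have : (a:ℝ) = a' := by linarith
    exact_mod_cast this
  · have : (b:ℝ) = b' := by linarith
    exact_mod_cast this

/-- The comb point set. -/
local instance : DecidableEq (EuclideanSpace ℝ (Fin 2)) := Classical.decEq _

def cS (β : ℕ) : Finset (EuclideanSpace ℝ (Fin 2)) :=
  (grid β).image (fun p => pt p.1 p.2)

lemma mem_cS {β : ℕ} {x : EuclideanSpace ℝ (Fin 2)} :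
    x ∈ cS β ↔ ∃ p : ℤ × ℤ, p ∈ grid β ∧ pt p.1 p.2 = x := by
  rw [cS, Finset.mem_image]

def vx (β : ℕ) (a b : ℤ) (h : (a,b) ∈ grid β) : ↥(cS β) :=
  ⟨pt a b, mem_cS.mpr ⟨(a,b), h, rfl⟩⟩

lemma vx_val {β : ℕ} {a b : ℤ} (h : (a,b) ∈ grid β) :
    ((vx β a b h : ↥(cS β)) : EuclideanSpace ℝ (Fin 2)) = pt a b := rfl

/-- The geometric graph on the comb, radius 1. -/
def Gg (β : ℕ) : SimpleGraph ↥(cS β) :=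
  geomGraph (fun p : ↥(cS β) => (p : EuclideanSpace ℝ (Fin 2))) 1

lemma exists_coords (β : ℕ) (v : ↥(cS β)) :
    ∃ p : ℤ × ℤ, p ∈ grid β ∧ pt p.1 p.2 = ↑v := by
  exact mem_cS.mp v.2

def co (β : ℕ) (v : ↥(cS β)) : ℤ × ℤ := (exists_coords β v).choose

lemma co_mem (β : ℕ) (v : ↥(cS β)) : ((co β v).1, (co β v).2) ∈ grid β := by
  have h := (exists_coords β v).choose_spec.1
  simpa [co] using h

lemma pt_co (β : ℕ) (v : ↥(cS β)) : pt (co β v).1 (co β v).2 = ↑v :=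
  (exists_coords β v).choose_spec.2

lemma co_vx {β : ℕ} {a b : ℤ} (h : (a,b) ∈ grid β) : co β (vx β a b h) = (a, b) := by
  have h1 : pt (co β (vx β a b h)).1 (co β (vx β a b h)).2 = pt a b :=
    (pt_co β (vx β a b h)).trans (vx_val h)
  have h2 := pt_inj h1
  exact Prod.ext h2.1 h2.2

lemma adj_coords {β : ℕ} {v w : ↥(cS β)} (h : (Gg β).Adj v w) :
    ((co β v).1 - (co β w).1)^2 + ((co β v).2 - (co β w).2)^2 ≤ 1 := by
  have hd : dist (↑v : EuclideanSpace ℝ (Fin 2)) ↑w < 1 := h.2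
  rw [← pt_co β v, ← pt_co β w] at hd
  exact (dist_pt _ _ _ _).mp hd

lemma adj_of {β : ℕ} {a b a' b' : ℤ} (h : (a,b) ∈ grid β) (h' : (a',b') ∈ grid β)
    (hne : ¬(a = a' ∧ b = b')) (hd : (a-a')^2 + (b-b')^2 ≤ 1) :
    (Gg β).Adj (vx β a b h) (vx β a' b' h') := by
  constructor
  · intro hc
    have h2 : pt a b = pt a' b' := by
      rw [← vx_val h, ← vx_val h', hc]
    exact hne (pt_inj h2)
  · show dist (pt a b) (pt a' b') < 1
    exact (dist_pt a b a' b').mpr hd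

/-- Walks are at least as long as the variation of any edge-Lipschitz integer function. -/
lemma walk_bound {β : ℕ} (f : ↥(cS β) → ℤ)
    (hf : ∀ x y, (Gg β).Adj x y → (f x - f y).natAbs ≤ 1) :
    ∀ {x y : ↥(cS β)} (p : (Gg β).Walk x y), (f x - f y).natAbs ≤ p.length := by
  intro x y p
  induction p with
  | nil => simp
  | @cons x z y h q ih =>
    have h1 := hf _ _ h
    rw [SimpleGraph.Walk.length_cons]
    omega

lemma dist_lower {β : ℕ} (f : ↥(cS β) → ℤ)
    (hf : ∀ x y, (Gg β).Adj x y → (f x - f y).natAbs ≤ 1)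
    {x y : ↥(cS β)} (hr : (Gg β).Reachable x y) :
    (f x - f y).natAbs ≤ (Gg β).dist x y := by
  obtain ⟨p, hp⟩ := hr.exists_walk_length_eq_dist
  calc (f x - f y).natAbs ≤ p.length := walk_bound f hf p
    _ = (Gg β).dist x y := hp

lemma grid_down {β : ℕ} {a b b' : ℤ} (h : (a,b) ∈ grid β) (h1 : 0 ≤ b') (h2 : b' ≤ b) :
    (a,b') ∈ grid β := by
  rw [mem_grid] at h ⊢
  omega

lemma spine_mem {β : ℕ} {c : ℤ} (h1 : 0 ≤ c) (h2 : c ≤ 2*β) : (c, (0:ℤ)) ∈ grid β := by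
  rw [mem_grid]; omega

/-- Vertical walk up a tooth. -/
lemma vert_walk {β : ℕ} {a : ℤ} (h0 : (a,(0:ℤ)) ∈ grid β) :
    ∀ b : ℤ, 0 ≤ b → ∀ h : (a,b) ∈ grid β,
      ∃ p : (Gg β).Walk (vx β a 0 h0) (vx β a b h), (p.length : ℤ) = b := by
  refine Int.le_induction
    (motive := fun b _ => ∀ h : (a,b) ∈ grid β,
      ∃ p : (Gg β).Walk (vx β a 0 h0) (vx β a b h), (p.length : ℤ) = b)
    (fun h => ⟨SimpleGraph.Walk.nil, by simp⟩) ?_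
  intro b hb ih h
  · have hbm : (a, b) ∈ grid β := grid_down h hb (by omega)
    obtain ⟨p, hp⟩ := ih hbm
    have hadj : (Gg β).Adj (vx β a b hbm) (vx β a (b+1) h) :=
      adj_of _ _ (by omega) (by ring_nf; omega)
    exact ⟨p.concat hadj, by rw [SimpleGraph.Walk.length_concat]; push_cast; omega⟩

/-- Horizontal walk along the spine from the origin. -/
lemma horiz_walk {β : ℕ} (h00 : ((0:ℤ),(0:ℤ)) ∈ grid β) :
    ∀ c : ℤ, 0 ≤ c → ∀ h : (c,(0:ℤ)) ∈ grid β,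
      ∃ p : (Gg β).Walk (vx β 0 0 h00) (vx β c 0 h), (p.length : ℤ) = c := by
  refine Int.le_induction
    (motive := fun c _ => ∀ h : (c,(0:ℤ)) ∈ grid β,
      ∃ p : (Gg β).Walk (vx β 0 0 h00) (vx β c 0 h), (p.length : ℤ) = c)
    (fun h => ⟨SimpleGraph.Walk.nil, by simp⟩) ?_
  intro c hc ih h
  · have hcm : (c, (0:ℤ)) ∈ grid β := by
      rw [mem_grid] at h ⊢; omega
    obtain ⟨p, hp⟩ := ih hcm
    have hadj : (Gg β).Adj (vx β c 0 hcm) (vx β (c+1) 0 h) :=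
      adj_of _ _ (by omega) (by ring_nf; omega)
    exact ⟨p.concat hadj, by rw [SimpleGraph.Walk.length_concat]; push_cast; omega⟩

lemma walk_u {β : ℕ} (h00 : ((0:ℤ),(0:ℤ)) ∈ grid β) {a b : ℤ} (h : (a,b) ∈ grid β) :
    ∃ p : (Gg β).Walk (vx β 0 0 h00) (vx β a b h), (p.length : ℤ) = a + b := by
  have hab : 0 ≤ a ∧ 0 ≤ b ∧ a ≤ 2*β := by rw [mem_grid] at h; omega
  have hsp : (a, (0:ℤ)) ∈ grid β := spine_mem hab.1 hab.2.2
  obtain ⟨p, hp⟩ := horiz_walk h00 a hab.1 hsp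
  obtain ⟨q, hq⟩ := vert_walk hsp b hab.2.1 h
  refine ⟨p.append q, ?_⟩
  rw [SimpleGraph.Walk.length_append]; push_cast; omega

lemma conn (β : ℕ) (h00 : ((0:ℤ),(0:ℤ)) ∈ grid β) : (Gg β).Connected := by
  rw [SimpleGraph.connected_iff]
  have key : ∀ x : ↥(cS β), (Gg β).Reachable (vx β 0 0 h00) x := by
    intro x
    have hm := co_mem β x
    have hx : x = vx β (co β x).1 (co β x).2 hm := by
      apply Subtype.ext
      rw [vx_val]
      exact (pt_co β x).symm
    rw [hx]
    obtain ⟨p, _⟩ := walk_u h00 hm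
    exact ⟨p⟩
  exact ⟨fun x y => (key x).symm.trans (key y), ⟨vx β 0 0 h00⟩⟩

/-- Potential function measuring hop distance from the tip of tooth `i`. -/
def pot (β i : ℕ) (v : ↥(cS β)) : ℤ :=
  if (co β v).1 = 2*i then (4*(β:ℤ)+2-2*i) - (co β v).2
  else (4*(β:ℤ)+2-2*i) + (co β v).2 + ((co β v).1 - 2*i).natAbs

lemma pot_vx {β i : ℕ} {a b : ℤ} (h : (a,b) ∈ grid β) :
    pot β i (vx β a b h) =
      if a = 2*i then (4*(β:ℤ)+2-2*i) - b
      else (4*(β:ℤ)+2-2*i) + b + (a - 2*i).natAbs := by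
  unfold pot
  rw [co_vx h]

lemma pot_lip {β i : ℕ} : ∀ x y, (Gg β).Adj x y →
    (pot β i x - pot β i y).natAbs ≤ 1 := by
  intro x y hadj
  have hd := adj_coords hadj
  have hx := co_mem β x
  have hy := co_mem β y
  rw [mem_grid] at hx hy
  set a := (co β x).1 with ha
  set b := (co β x).2 with hb
  set a' := (co β y).1 with ha'
  set b' := (co β y).2 with hb'
  -- linearize the quadratic adjacency constraint
  have hcase : (a = a' ∧ -1 ≤ b - b' ∧ b - b' ≤ 1) ∨
      (b = b' ∧ -1 ≤ a - a' ∧ a - a' ≤ 1) := by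
    rcases eq_or_ne a a' with hq | hq
    · left
      refine ⟨hq, ?_, ?_⟩ <;> nlinarith [sq_nonneg (a - a'), sq_nonneg (b - b' + 1),
        sq_nonneg (b - b' - 1)]
    · right
      have h1 : 1 ≤ (a - a')^2 := by
        rcases lt_or_gt_of_ne hq with h | h <;> nlinarith
      have h2 : (b - b')^2 ≤ 0 := by nlinarith [sq_nonneg (b - b')]
      have h3 : b = b' := by nlinarith [sq_nonneg (b - b')]
      refine ⟨h3, ?_, ?_⟩ <;> nlinarith [sq_nonneg (a - a' + 1), sq_nonneg (a - a' - 1)]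
  unfold pot
  rw [← ha, ← hb, ← ha', ← hb']
  split_ifs <;> omega

/-- The tip of tooth `i`. -/
lemma tip_mem (β i : ℕ) : ((2*(min i β : ℤ)), (4*(β:ℤ)+2-2*(min i β : ℤ))) ∈ grid β := by
  rw [mem_grid]
  omega

def tip (β i : ℕ) : ↥(cS β) := vx β _ _ (tip_mem β i)

end

end UDGComb

open UDGComb SimpleGraph in
/-- **Finite unit disk graphs can have arbitrarily large doubling constant.** For every
`β ≥ 1` there are a finite point set `S ⊆ ℝ²`, a radius `r > 0`, a point `u ∈ S` and an
integer `R ≥ 1` such that every family of hop-metric balls of radius `R` covering the ball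
of radius `2R` around `u` has more than `β` members. -/
theorem finite_udg_large_doubling (β : ℕ) (hβ : 1 ≤ β) :
    ∃ (S : Finset (EuclideanSpace ℝ (Fin 2))) (r : ℝ) (u : ↥S) (R : ℕ), 0 < r ∧ 1 ≤ R ∧
      ∀ s : Finset ↥S,
        ({v : ↥S | (geomGraph (fun p : ↥S => (p : EuclideanSpace ℝ (Fin 2))) r).dist u v
            ≤ 2 * R} ⊆
          ⋃ w ∈ s, {v : ↥S |
            (geomGraph (fun p : ↥S => (p : EuclideanSpace ℝ (Fin 2))) r).dist w v ≤ R}) →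
        β < s.card := by
  classical
  have h00 : ((0:ℤ),(0:ℤ)) ∈ grid β := spine_mem le_rfl (by positivity)
  refine ⟨cS β, 1, vx β 0 0 h00, 2*β+1, one_pos, by omega, ?_⟩
  intro s hcov
  set u : ↥(cS β) := vx β 0 0 h00 with hu
  have hconn : (Gg β).Connected := conn β h00
  -- every tip is in the ball of radius 2R around u
  have htip_in : ∀ i : ℕ, i ≤ β → (Gg β).dist u (tip β i) ≤ 2 * (2*β+1) := by
    intro i hi
    obtain ⟨p, hp⟩ := walk_u h00 (tip_mem β i)
    have hle : (Gg β).dist u (tip β i) ≤ p.length := SimpleGraph.dist_le p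
    have hi' : (i:ℤ) ≤ β := by exact_mod_cast hi
    omega
  -- from the covering, pick a center for each tip
  have key : ∀ i : ℕ, i ≤ β → ∃ w, w ∈ s ∧ (Gg β).dist w (tip β i) ≤ (2*β+1) := by
    intro i hi
    have hmem : tip β i ∈ {v : ↥(cS β) | (Gg β).dist u v ≤ 2 * (2*β+1)} := htip_in i hi
    have := hcov hmem
    simpa [Set.mem_iUnion, Gg] using this
  by_contra hs
  push_neg at hs
  -- the assignment tips → centers
  let g : ℕ → ↥(cS β) := fun i =>
    if h : ∃ w, w ∈ s ∧ (Gg β).dist w (tip β i) ≤ (2*β+1) then h.choose else u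
  have hg : ∀ i : ℕ, i ≤ β → g i ∈ s ∧ (Gg β).dist (g i) (tip β i) ≤ (2*β+1) := by
    intro i hi
    have h := key i hi
    simp only [g, dif_pos h]
    exact h.choose_spec
  have hmaps : ∀ i ∈ Finset.range (β+1), g i ∈ s := fun i hi =>
    (hg i (by simpa using Nat.lt_succ_iff.mp (Finset.mem_range.mp hi))).1
  have hcard : s.card < (Finset.range (β+1)).card := by
    rw [Finset.card_range]; omega
  obtain ⟨i, hi, j, hj, hij, hgij⟩ :=
    Finset.exists_ne_map_eq_of_card_lt_of_maps_to hcard hmaps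
  have hi' : i ≤ β := Nat.lt_succ_iff.mp (Finset.mem_range.mp hi)
  have hj' : j ≤ β := Nat.lt_succ_iff.mp (Finset.mem_range.mp hj)
  -- upper bound on the distance between the two tips via the common center
  have d1 : (Gg β).dist (g i) (tip β i) ≤ (2*β+1) := (hg i hi').2
  have d2 : (Gg β).dist (g i) (tip β j) ≤ (2*β+1) := by
    rw [hgij]; exact (hg j hj').2
  have htri : (Gg β).dist (tip β i) (tip β j) ≤
      (Gg β).dist (tip β i) (g i) + (Gg β).dist (g i) (tip β j) :=
    hconn.dist_triangle
  have hup : (Gg β).dist (tip β i) (tip β j) ≤ 2*(2*β+1) := by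
    rw [SimpleGraph.dist_comm] at d1
    omega
  -- lower bound via the potential of tooth i
  have hr : (Gg β).Reachable (tip β i) (tip β j) := hconn.preconnected _ _
  have hlow := dist_lower (pot β i) pot_lip hr
  have hii : (i:ℤ) ≤ β := by exact_mod_cast hi'
  have hjj : (j:ℤ) ≤ β := by exact_mod_cast hj'
  have hijz : (i:ℤ) ≠ j := by exact_mod_cast hij
  have e1 : pot β i (tip β i) = 0 := by
    rw [tip, pot_vx, if_pos (by omega)]
    omega
  have e2 : pot β i (tip β j) =
      (4*(β:ℤ)+2-2*i) + (4*(β:ℤ)+2-2*(j:ℤ)) + ((2*(j:ℤ) - 2*i).natAbs : ℤ) := by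
    rw [tip, pot_vx, if_neg (by omega)]
    omega
  rw [e1, e2] at hlow
  omega
end

section
/- Fix an integer b ≥ 1, reals γ > 0 and θ ∈ (0,1). For each n, let m = m(n) = n/(γ²·(log n)^{1−θ}) (assume m is an integer) and place n balls independently and uniformly at random into m equally likely bins. Let F be the number of bins containing exactly b balls. Then for all sufficiently large n, the expected value satisfies E[F] = m·C(n,b)·(1/m)^b·(1 − 1/m)^{n−b} ≥ n^{7/8}, where C(n,b) is the binomial coefficient. -/
open MeasureTheory ProbabilityTheory ENNReal

/-- The number of bins (elements of `Fin m`) containing exactly `b` of the `n` balls under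
the placement `y : Fin n → Fin m`. -/
def binCount {n m : ℕ} (b : ℕ) (y : Fin n → Fin m) : ℕ :=
  (Finset.univ.filter fun j : Fin m =>
    (Finset.univ.filter fun i : Fin n => y i = j).card = b).card


private lemma binCount_expectation (n m b : ℕ) (hm : 1 ≤ m)
    (Ω : Type) [MeasurableSpace Ω] (μ : Measure Ω) [IsProbabilityMeasure μ]
    (Y : Fin n → Ω → Fin m)
    (hY : ∀ i, Measurable (Y i))
    (hind : iIndepFun Y μ)
    (hunif : ∀ (i : Fin n) (j : Fin m), μ {ω | Y i ω = j} = (m : ℝ≥0∞)⁻¹) :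
    (∫ ω, (binCount b (fun i => Y i ω) : ℝ) ∂μ) =
      m * n.choose b * (1 / m) ^ b * (1 - 1 / (m : ℝ)) ^ (n - b) := by
  classical
  set p : ℝ≥0∞ := (m : ℝ≥0∞)⁻¹ with hp
  have hp1 : p ≤ 1 := by
    rw [hp, ENNReal.inv_le_one]
    exact_mod_cast hm
  -- the elementary events
  set A : Fin m → Finset (Fin n) → Set Ω :=
    fun j S => ⋂ i, Y i ⁻¹' (if i ∈ S then {j} else ({j}ᶜ : Set (Fin m))) with hA
  have hA_mem : ∀ j S ω, ω ∈ A j S ↔ Finset.univ.filter (fun i => Y i ω = j) = S := by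
    intro j S ω
    rw [hA]
    simp only [Set.mem_iInter, Set.mem_preimage, Finset.ext_iff, Finset.mem_filter,
      Finset.mem_univ, true_and]
    refine forall_congr' fun i => ?_
    by_cases h : i ∈ S <;> simp [h]
  have hsets_meas : ∀ (j : Fin m) (S : Finset (Fin n)) (i : Fin n),
      MeasurableSet (if i ∈ S then {j} else ({j}ᶜ : Set (Fin m))) := by
    intro j S i
    by_cases h : i ∈ S <;> simp [h]
  have hA_meas : ∀ j S, MeasurableSet (A j S) := by
    intro j S
    exact MeasurableSet.iInter fun i => (hY i) (hsets_meas j S i)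
  have hA_measure : ∀ (j : Fin m) (S : Finset (Fin n)),
      μ (A j S) = p ^ S.card * (1 - p) ^ (n - S.card) := by
    intro j S
    have h1 : A j S = ⋂ i ∈ Finset.univ,
        Y i ⁻¹' (if i ∈ S then {j} else ({j}ᶜ : Set (Fin m))) := by
      rw [hA]; simp
    rw [h1, hind.measure_inter_preimage_eq_mul Finset.univ (fun i _ => hsets_meas j S i)]
    have hsing : ∀ i : Fin n, μ (Y i ⁻¹' {j}) = p := by
      intro i
      have : Y i ⁻¹' {j} = {ω | Y i ω = j} := by ext ω; simp
      rw [this, hunif]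
    have hval : ∀ i : Fin n,
        μ (Y i ⁻¹' (if i ∈ S then {j} else ({j}ᶜ : Set (Fin m))))
          = if i ∈ S then p else 1 - p := by
      intro i
      by_cases h : i ∈ S
      · simp only [h, if_true]; exact hsing i
      · simp only [h, if_false]
        rw [Set.preimage_compl, prob_compl_eq_one_sub ((hY i) (measurableSet_singleton j)),
          hsing i]
    rw [Finset.prod_congr rfl (fun i _ => hval i), ← Finset.prod_mul_prod_compl S]
    rw [Finset.prod_congr rfl (fun i hi => if_pos hi),
      Finset.prod_congr rfl (fun i hi => if_neg (Finset.mem_compl.mp hi)),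
      Finset.prod_const, Finset.prod_const, Finset.card_compl, Fintype.card_fin]
  -- the bin events
  set E : Fin m → Set Ω :=
    fun j => {ω | (Finset.univ.filter fun i => Y i ω = j).card = b} with hE
  have hE_decomp : ∀ j, E j =
      ⋃ S ∈ Finset.powersetCard b (Finset.univ : Finset (Fin n)), A j S := by
    intro j
    ext ω
    simp only [hE, Set.mem_setOf_eq, Set.mem_iUnion, hA_mem, Finset.mem_powersetCard]
    constructor
    · intro h; exact ⟨_, ⟨Finset.subset_univ _, h⟩, rfl⟩
    · rintro ⟨S, ⟨-, hc⟩, rfl⟩; exact hc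
  have hE_meas : ∀ j, MeasurableSet (E j) := by
    intro j
    rw [hE_decomp j]
    exact (Finset.powersetCard b Finset.univ).measurableSet_biUnion fun S _ => hA_meas j S
  have hE_measure : ∀ j, μ (E j) = (n.choose b : ℝ≥0∞) * (p ^ b * (1 - p) ^ (n - b)) := by
    intro j
    have hdisj : Set.PairwiseDisjoint
        ↑(Finset.powersetCard b (Finset.univ : Finset (Fin n))) (A j) := by
      intro S _ T _ hST
      refine Set.disjoint_left.mpr fun ω hSω hTω => hST ?_
      rw [← (hA_mem j S ω).mp hSω, (hA_mem j T ω).mp hTω]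
    rw [hE_decomp j, measure_biUnion_finset hdisj (fun S _ => hA_meas j S)]
    rw [Finset.sum_congr rfl (fun S hS => by
      rw [hA_measure j S, (Finset.mem_powersetCard.mp hS).2])]
    rw [Finset.sum_const, Finset.card_powersetCard, Finset.card_univ, Fintype.card_fin,
      nsmul_eq_mul]
  -- rewrite binCount as a sum of indicators
  have key : ∀ ω, (binCount b (fun i => Y i ω) : ℝ) =
      ∑ j : Fin m, (E j).indicator (fun _ => (1 : ℝ)) ω := by
    intro ω
    rw [binCount, Finset.card_filter]
    push_cast
    refine Finset.sum_congr rfl fun j _ => ?_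
    by_cases h : (Finset.univ.filter fun i => Y i ω = j).card = b
    · rw [if_pos h, Set.indicator_of_mem (show ω ∈ E j from h)]
    · rw [if_neg h, Set.indicator_of_notMem (show ω ∉ E j from h)]
  calc ∫ ω, (binCount b (fun i => Y i ω) : ℝ) ∂μ
      = ∑ j : Fin m, ∫ ω, (E j).indicator (fun _ => (1 : ℝ)) ω ∂μ := by
        simp only [key]
        exact integral_finset_sum _ fun j _ => (integrable_const (1 : ℝ)).indicator (hE_meas j)
    _ = ∑ j : Fin m, (μ (E j)).toReal := by
        refine Finset.sum_congr rfl fun j _ => ?_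
        rw [integral_indicator_const (1 : ℝ) (hE_meas j), smul_eq_mul, mul_one, measureReal_def]
    _ = m * n.choose b * (1 / m) ^ b * (1 - 1 / (m : ℝ)) ^ (n - b) := by
        simp only [hE_measure]
        rw [Finset.sum_const, Finset.card_univ, Fintype.card_fin, nsmul_eq_mul]
        have hm0 : ((m : ℕ) : ℝ≥0∞) ≠ 0 := by
          exact_mod_cast (Nat.pos_of_ne_zero (by omega)).ne'
        have hpt : p.toReal = 1 / (m : ℝ) := by
          rw [hp, ENNReal.toReal_inv, ENNReal.toReal_natCast, one_div]

        have h1pt : (1 - p).toReal = 1 - 1 / (m : ℝ) := by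
          rw [ENNReal.toReal_sub_of_le hp1 ENNReal.one_ne_top, ENNReal.toReal_one, hpt]
        rw [ENNReal.toReal_mul, ENNReal.toReal_mul, ENNReal.toReal_pow, ENNReal.toReal_pow,
          ENNReal.toReal_natCast, hpt, h1pt]
        ring

open Filter Real in
private lemma eventually_lower (b : ℕ) (hb : 1 ≤ b) (γ θ : ℝ)
    (hγ : 0 < γ) (hθ0 : 0 < θ) (hθ1 : θ < 1) :
    ∀ᶠ n : ℕ in atTop, ∀ m : ℕ,
      (m : ℝ) = n / (γ ^ 2 * Real.log n ^ (1 - θ)) →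
      (2 ≤ (m : ℝ)) ∧
      (n : ℝ) ^ ((7 : ℝ) / 8) ≤
        m * n.choose b * (1 / m) ^ b * (1 - 1 / (m : ℝ)) ^ (n - b) := by
  have hlog : Tendsto (fun n : ℕ => Real.log n) atTop atTop :=
    Real.tendsto_log_atTop.comp tendsto_natCast_atTop_atTop
  have ev1 : ∀ᶠ n : ℕ in atTop, 2 * b ≤ n := eventually_atTop.mpr ⟨2 * b, fun n h => h⟩
  have ev2 : ∀ᶠ n : ℕ in atTop, 1 ≤ Real.log n := hlog.eventually_ge_atTop 1
  have ev3 : ∀ᶠ n : ℕ in atTop, 32 * γ ^ 2 ≤ Real.log n ^ θ :=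
    ((tendsto_rpow_atTop hθ0).comp hlog).eventually_ge_atTop _
  have ev4 : ∀ᶠ n : ℕ in atTop, 16 * Real.log (2 * b.factorial) ≤ Real.log n :=
    hlog.eventually_ge_atTop _
  have ev5 : ∀ᶠ n : ℕ in atTop, 2 ≤ γ ^ 2 * Real.log n ^ (1 - θ) := by
    have h : Tendsto (fun n : ℕ => γ ^ 2 * Real.log n ^ (1 - θ)) atTop atTop :=
      ((tendsto_rpow_atTop (by linarith : (0:ℝ) < 1 - θ)).comp hlog).const_mul_atTop
        (by positivity)
    exact h.eventually_ge_atTop 2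
  filter_upwards [ev1, ev2, ev3, ev4, ev5] with n h2b hx1 hθx hbf hgL2 m hm
  set x : ℝ := Real.log n with hxdef
  set L : ℝ := x ^ (1 - θ) with hLdef
  have hn2 : 2 ≤ n := le_trans (by omega) h2b
  have hn0R : (0:ℝ) < n := by exact_mod_cast (by omega : 0 < n)
  have hx0 : 0 < x := lt_of_lt_of_le one_pos hx1
  have hL1 : 1 ≤ L := by
    have h := Real.rpow_le_rpow zero_le_one hx1 (by linarith : (0:ℝ) ≤ 1 - θ)
    rwa [Real.one_rpow] at h
  have hL0 : 0 < L := lt_of_lt_of_le one_pos hL1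
  have hg0 : 0 < γ ^ 2 * L := by positivity
  have hxθ : x ^ θ * L = x := by
    rw [hLdef, ← Real.rpow_add hx0]
    norm_num
  have hγL : γ ^ 2 * L ≤ x / 32 := by
    have h := mul_le_mul_of_nonneg_right hθx hL0.le
    rw [hxθ] at h
    linarith
  have hlogn : x ≤ (n : ℝ) := by
    have := Real.log_le_sub_one_of_pos hn0R
    linarith
  have hM : (m : ℝ) = (n : ℝ) / (γ ^ 2 * L) := hm
  have hM2 : 2 ≤ (m : ℝ) := by
    rw [hM, le_div_iff₀ hg0]
    nlinarith
  have hM0 : (0:ℝ) < m := by linarith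
  have hnM : (n : ℝ) / (m : ℝ) = γ ^ 2 * L := by
    rw [hM]
    field_simp
  refine ⟨hM2, ?_⟩
  set M : ℝ := (m : ℝ) with hMdef
  have hu2 : 1 / M ≤ 1 / 2 := by
    apply one_div_le_one_div_of_le <;> linarith
  have hu0 : 0 < 1 / M := by positivity
  have hq0 : (0:ℝ) < 1 - 1 / M := by linarith
  have hq1 : 1 - 1 / M ≤ 1 := by linarith
  -- exponential lower bound for 1 - 1/M
  have hexp : Real.exp (-(2 / M)) ≤ 1 - 1 / M := by
    have h1 : 2 / M + 1 ≤ Real.exp (2 / M) := Real.add_one_le_exp _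
    have h2 : (0:ℝ) < 1 + 2 / M := by positivity
    have h3 : (1 + 2 / M)⁻¹ ≤ 1 - 1 / M := by
      rw [inv_eq_one_div, div_le_iff₀ h2]
      have hval : (1 - 1 / M) * (1 + 2 / M) = 1 + (1 / M) * (1 - 2 * (1 / M)) := by ring
      have hnn : (0:ℝ) ≤ (1 / M) * (1 - 2 * (1 / M)) :=
        mul_nonneg hu0.le (by linarith)
      linarith
    calc Real.exp (-(2 / M)) = (Real.exp (2 / M))⁻¹ := by rw [Real.exp_neg]
      _ ≤ (1 + 2 / M)⁻¹ := by
          apply inv_anti₀ h2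
          linarith
      _ ≤ 1 - 1 / M := h3
  -- binomial lower bound
  have hfac0 : (0:ℝ) < (b.factorial : ℝ) := by exact_mod_cast b.factorial_pos
  have hC : ((n : ℝ) / 2) ^ b / (b.factorial : ℝ) ≤ (n.choose b : ℝ) := by
    have h1 : (n - b) ^ b ≤ n.descFactorial b :=
      le_trans (Nat.pow_le_pow_left (by omega) b) (n.pow_sub_le_descFactorial b)
    have h3 : (n : ℝ) / 2 ≤ ((n - b : ℕ) : ℝ) := by
      rw [Nat.cast_sub (by omega)]
      have : ((2 * b : ℕ) : ℝ) ≤ (n : ℝ) := by exact_mod_cast h2b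
      push_cast at this ⊢
      linarith
    have h4 : ((n : ℝ) / 2) ^ b ≤ (n.descFactorial b : ℝ) := by
      calc ((n : ℝ) / 2) ^ b ≤ (((n - b : ℕ) : ℝ)) ^ b :=
            pow_le_pow_left₀ (by positivity) h3 b
        _ = (((n - b) ^ b : ℕ) : ℝ) := by push_cast; ring
        _ ≤ (n.descFactorial b : ℝ) := by exact_mod_cast h1
    rw [div_le_iff₀ hfac0]
    calc ((n:ℝ)/2) ^ b ≤ (n.descFactorial b : ℝ) := h4
      _ = (n.choose b : ℝ) * (b.factorial : ℝ) := by
          rw [Nat.descFactorial_eq_factorial_mul_choose]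
          push_cast
          ring
  -- the last step: n^(7/8) ≤ n/(2 b!) * exp(-(x/16))
  have hfac2 : (0:ℝ) < 2 * (b.factorial : ℝ) := by positivity
  have step_last : (n : ℝ) ^ ((7:ℝ)/8) ≤ (n : ℝ) / (2 * b.factorial) * Real.exp (-(x/16)) := by
    have hne : (n : ℝ) ^ ((7:ℝ)/8) = Real.exp (x * (7/8)) := by
      rw [Real.rpow_def_of_pos hn0R]
    have hnexp : (n : ℝ) = Real.exp x := (Real.exp_log hn0R).symm
    have hfb : (2 * (b.factorial : ℝ)) ≤ Real.exp (x/16) := by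
      rw [← Real.exp_log hfac2]
      apply Real.exp_le_exp.mpr
      have : Real.log (2 * (b.factorial:ℝ)) = Real.log ((2 * b.factorial : ℕ) : ℝ) := by
        push_cast; ring_nf
      rw [this]
      linarith
    rw [hne, hnexp, div_mul_eq_mul_div, le_div_iff₀ hfac2, ← Real.exp_add]
    calc Real.exp (x * (7/8)) * (2 * (b.factorial:ℝ))
        ≤ Real.exp (x * (7/8)) * Real.exp (x/16) := by
          apply mul_le_mul_of_nonneg_left hfb (Real.exp_nonneg _)
      _ = Real.exp (x * (7/8) + x/16) := (Real.exp_add _ _).symm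
      _ ≤ Real.exp (x + -(x/16)) := Real.exp_le_exp.mpr (by linarith)
  -- main chain
  have hq0' : (0:ℝ) ≤ 1 - 1 / M := hq0.le
  calc (n : ℝ) ^ ((7:ℝ)/8)
      ≤ (n : ℝ) / (2 * b.factorial) * Real.exp (-(x/16)) := step_last
    _ ≤ (n : ℝ) / (2 * b.factorial) * Real.exp (-(2 * (γ ^ 2 * L))) := by
        apply mul_le_mul_of_nonneg_left _ (by positivity)
        exact Real.exp_le_exp.mpr (by linarith)
    _ = M * (γ ^ 2 * L / 2 * (1 / b.factorial)) * Real.exp (-(2 * (γ ^ 2 * L))) := by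
        have hMg : M * (γ ^ 2 * L) = (n : ℝ) := by rw [hM]; field_simp
        rw [← hMg]; ring
    _ ≤ M * ((γ ^ 2 * L / 2) ^ b * (1 / b.factorial)) * Real.exp (-(2 * (γ ^ 2 * L))) := by
        apply mul_le_mul_of_nonneg_right _ (Real.exp_nonneg _)
        apply mul_le_mul_of_nonneg_left _ (by linarith)
        apply mul_le_mul_of_nonneg_right _ (by positivity)
        exact le_self_pow₀ (by linarith) (by omega)
    _ = M * (((n:ℝ)/2) ^ b / b.factorial) * (1 / M) ^ b * Real.exp (-(2 * (γ ^ 2 * L))) := by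
        rw [← hnM, show (n:ℝ) / M / 2 = (n:ℝ)/2 * (1/M) by ring, mul_pow]
        ring
    _ ≤ M * (n.choose b : ℝ) * (1 / M) ^ b * Real.exp (-(2 * (γ ^ 2 * L))) := by
        apply mul_le_mul_of_nonneg_right _ (Real.exp_nonneg _)
        apply mul_le_mul_of_nonneg_right _ (by positivity)
        exact mul_le_mul_of_nonneg_left hC (by linarith)
    _ ≤ M * (n.choose b : ℝ) * (1 / M) ^ b * (1 - 1/M) ^ (n - b) := by
        apply mul_le_mul_of_nonneg_left _ (by positivity)
        have e1 : Real.exp (-(2 * (γ ^ 2 * L))) = Real.exp (-(2/M)) ^ n := by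
          rw [← Real.exp_nat_mul, ← hnM]
          congr 1
          ring
        rw [e1]
        calc Real.exp (-(2/M)) ^ n ≤ (1 - 1/M) ^ n :=
              pow_le_pow_left₀ (Real.exp_nonneg _) hexp n
          _ ≤ (1 - 1/M) ^ (n - b) := pow_le_pow_of_le_one hq0' hq1 (Nat.sub_le n b)

/-- **Balls into bins, expectation.** Throwing `n` balls i.i.d. uniformly into
`m = n/(γ²(log n)^(1−θ))` bins, the expected number `E[F]` of bins with exactly `b` balls
equals `m·C(n,b)·(1/m)^b·(1−1/m)^(n−b)` and is at least `n^(7/8)` for large `n`. -/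
theorem balls_in_bins_expectation (b : ℕ) (hb : 1 ≤ b) (γ θ : ℝ)
    (hγ : 0 < γ) (hθ0 : 0 < θ) (hθ1 : θ < 1) :
    ∃ n₀ : ℕ, ∀ n, n₀ ≤ n → ∀ m : ℕ,
      (m : ℝ) = n / (γ ^ 2 * Real.log n ^ (1 - θ)) →
      ∀ (Ω : Type) [MeasurableSpace Ω] (μ : Measure Ω) [IsProbabilityMeasure μ]
        (Y : Fin n → Ω → Fin m),
        (∀ i, Measurable (Y i)) →
        iIndepFun Y μ →
        (∀ (i : Fin n) (j : Fin m), μ {ω | Y i ω = j} = (m : ℝ≥0∞)⁻¹) →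
        (∫ ω, (binCount b (fun i => Y i ω) : ℝ) ∂μ) =
            m * n.choose b * (1 / m) ^ b * (1 - 1 / (m : ℝ)) ^ (n - b) ∧
          (n : ℝ) ^ ((7 : ℝ) / 8) ≤ ∫ ω, (binCount b (fun i => Y i ω) : ℝ) ∂μ := by
  obtain ⟨n₀, hn₀⟩ := Filter.eventually_atTop.mp (eventually_lower b hb γ θ hγ hθ0 hθ1)
  refine ⟨n₀, fun n hn m hm Ω _ μ _ Y hYmeas hind hunif => ?_⟩
  obtain ⟨hm2, hlow⟩ := hn₀ n hn m hm
  have hm1 : 1 ≤ m := by exact_mod_cast (by linarith : (1 : ℝ) ≤ (m : ℝ))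
  have heq := binCount_expectation n m b hm1 Ω μ Y hYmeas hind hunif
  exact ⟨heq, heq ▸ hlow⟩
end
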